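/- arXiv:1003.5346 — 6 statements merged into one kernel-verified Lean document; each statement's English description precedes it below -/
import Mathlib

section
/- If f : D → ℝ^n is a convex and strongly monotone map on an open convex set D ⊆ ℝ^m, then every matrix in the subdifferential ∂f(v) has all entries strictly positive, for each v ∈ D. -/
noncomputable section
open Filter Topology Set
open scoped Classical

/-- A square real matrix is *stable* if all of its orbits are bounded. -/
def MatStable {ι : Type*} [Fintype ι] [DecidableEq ι] (P : Matrix ι ι ℝ) : Prop :=
  ∀ x : ι → ℝ, ∃ c : ℝ, ∀ k : ℕ, ‖(P ^ k).mulVec x‖ ≤ c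

/-- Spectral radius of a real square matrix, via its complex spectrum. -/
def SpecRad {ι : Type*} [Fintype ι] (Q : Matrix ι ι ℝ) : ℝ :=
  haveI := Classical.decEq ι
  sSup {r : ℝ | ∃ μ : ℂ, μ ∈ spectrum ℂ (Q.map (fun a => (a : ℂ))) ∧ r = ‖μ‖}

/-- `i` has access to `j` in the digraph of the nonnegative matrix `P`. -/
def AccessM {n : ℕ} (P : Matrix (Fin n) (Fin n) ℝ) : Fin n → Fin n → Prop :=
  Relation.ReflTransGen (fun i j => 0 < P i j)

/-- `C` is a class of `P` (an equivalence class of mutual access). -/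
def IsClass {n : ℕ} (P : Matrix (Fin n) (Fin n) ℝ) (C : Set (Fin n)) : Prop :=
  ∃ i, C = {j | AccessM P i j ∧ AccessM P j i}

/-- Spectral radius of the principal submatrix `P_{CC}`. -/
def SpecRadOn {n : ℕ} (P : Matrix (Fin n) (Fin n) ℝ) (C : Set (Fin n)) : ℝ :=
  haveI : Fintype C := Fintype.ofFinite _
  SpecRad (Matrix.of fun i j : C => P i.1 j.1)

/-- A critical class of a stable nonnegative matrix. -/
def IsCriticalClass {n : ℕ} (P : Matrix (Fin n) (Fin n) ℝ) (C : Set (Fin n)) : Prop :=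
  IsClass P C ∧ SpecRadOn P C = 1

/-- The set of critical nodes of `P`. -/
def CriticalNodes {n : ℕ} (P : Matrix (Fin n) (Fin n) ℝ) : Set (Fin n) :=
  {i | ∃ C, IsCriticalClass P C ∧ i ∈ C}

/-- The subdifferential of `f` at `v` relative to the domain `D`. -/
def Subdiff {m n : ℕ} (f : (Fin m → ℝ) → (Fin n → ℝ)) (D : Set (Fin m → ℝ))
    (v : Fin m → ℝ) : Set (Matrix (Fin n) (Fin m) ℝ) :=
  {M | ∀ x ∈ D, M.mulVec (x - v) ≤ f x - f v}

/-! A small step `t` from `v` against the basis vector `e_j` stays in the open set `D` and,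
by strong monotonicity, strictly decreases every coordinate of `f`; the subgradient inequality
then reads `-t * M i j ≤ f (v - t e_j) i - f v i < 0`. -/

theorem exists_pos_sub_smul_mem {E : Type*} [AddCommGroup E] [Module ℝ E] [TopologicalSpace E]
    [IsTopologicalAddGroup E] [ContinuousSMul ℝ E] {D : Set E} (hD : IsOpen D) {v : E}
    (hv : v ∈ D) (w : E) : ∃ t : ℝ, 0 < t ∧ v - t • w ∈ D := by
  have hcont : Continuous fun t : ℝ => v - t • w := by fun_prop
  have hnhds : ∀ᶠ t in 𝓝[>] (0 : ℝ), v - t • w ∈ D :=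
    nhdsWithin_le_nhds (hcont.continuousAt.preimage_mem_nhds (by simpa using hD.mem_nhds hv))
  exact (hnhds.and self_mem_nhdsWithin).exists.imp fun t h => ⟨h.2, h.1⟩

theorem mulVec_sub_apply_pos_of_mem_subdiff {m n : ℕ} {f : (Fin m → ℝ) → (Fin n → ℝ)}
    {D : Set (Fin m → ℝ)} {v x : Fin m → ℝ} {M : Matrix (Fin n) (Fin m) ℝ}
    (hM : M ∈ Subdiff f D v) (hx : x ∈ D) {i : Fin n} (hf : f x i < f v i) :
    0 < M.mulVec (v - x) i := by
  have hsub := hM x hx i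
  rw [← neg_sub, Matrix.mulVec_neg] at hsub
  simp only [Pi.neg_apply, Pi.sub_apply] at hsub
  linarith

theorem stmt3_general {m n : ℕ} (D : Set (Fin m → ℝ)) (hDo : IsOpen D)
    (f : (Fin m → ℝ) → (Fin n → ℝ))
    (hsmono : ∀ x ∈ D, ∀ y ∈ D, x ≤ y → x ≠ y → ∀ i, f x i < f y i)
    (v : Fin m → ℝ) (hv : v ∈ D)
    (M : Matrix (Fin n) (Fin m) ℝ) (hM : M ∈ Subdiff f D v) :
    ∀ i j, 0 < M i j := by
  intro i j
  obtain ⟨t, ht, hxD⟩ := exists_pos_sub_smul_mem hDo hv (Pi.single j 1 : Fin m → ℝ)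
  have hle : v - t • Pi.single j 1 ≤ v :=
    sub_le_self _ (smul_nonneg ht.le (Pi.single_nonneg.2 zero_le_one))
  have hne : v - t • Pi.single j 1 ≠ v := by
    simp [sub_eq_self, ht.ne']
  have hpos := mulVec_sub_apply_pos_of_mem_subdiff hM hxD (hsmono _ hxD v hv hle hne i)
  simpa [Matrix.mulVec_smul, Matrix.mulVec_single_one, ht] using hpos

/-- matrices in the subdifferential of a convex strongly monotone map
have strictly positive entries. -/
theorem stmt3 {m n : ℕ} (D : Set (Fin m → ℝ)) (hDo : IsOpen D) (hDc : Convex ℝ D)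
    (f : (Fin m → ℝ) → (Fin n → ℝ))
    (hconv : ∀ i, ConvexOn ℝ D (fun x => f x i))
    (hsmono : ∀ x ∈ D, ∀ y ∈ D, x ≤ y → x ≠ y → ∀ i, f x i < f y i)
    (v : Fin m → ℝ) (hv : v ∈ D)
    (M : Matrix (Fin n) (Fin m) ℝ) (hM : M ∈ Subdiff f D v) :
    ∀ i j, 0 < M i j :=
  stmt3_general D hDo f hsmono v hv M hM
end
end

section
/- Let f : D → D be a convex monotone map on an open convex set D ⊆ ℝ^n with a fixed point v. If there exists a neighbourhood V ⊆ D of v such that every orbit of every point of V under f is bounded, then v is a Lyapunov stable fixed point of f. -/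
noncomputable section
open Filter Topology Set
open scoped Classical

/-!
Put `b = v + δ·𝟙` in the neighbourhood, so that its orbit is bounded. For `0 ≤ t ≤ 1`,
convexity and monotonicity give `fᵏ((1 - t)v + tb) ≤ (1 - t)v + t fᵏ(b)`, so the orbit of
`u = (1 - t)v + tb` stays above `v` and within `t · supₖ ‖fᵏ(b) - v‖` of it. Convexity at the
midpoint `v` of `w` and `2v - w` gives `f(2v - w) ≥ 2v - f(w)`, hence
`fᵏ(2v - u) ≥ 2v - fᵏ(u)`. The box `[2v - u, u]` is the sup-norm ball of radius `tδ` about `v`,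
and monotonicity squeezes the orbit of each of its points between these two orbits, so it
stays within `t · supₖ ‖fᵏ(b) - v‖` of `v`, which is small for small `t`.
-/

open Metric

theorem convexOn_pi {𝕜 E β ι : Type*} [Semiring 𝕜] [PartialOrder 𝕜] [AddCommMonoid E]
    [AddCommMonoid β] [PartialOrder β] [SMul 𝕜 E] [SMul 𝕜 β] {D : Set E} {f : E → ι → β}
    (hD : Convex 𝕜 D) (hf : ∀ i, ConvexOn 𝕜 D fun x => f x i) : ConvexOn 𝕜 D f :=
  ⟨hD, fun _ hx _ hy _ _ ha hb hab i => (hf i).2 hx hy ha hb hab⟩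

theorem MonotoneOn.iterate {α : Type*} [Preorder α] {D : Set α} {f : α → α}
    (hf : MonotoneOn f D) (hmaps : MapsTo f D D) : ∀ k, MonotoneOn f^[k] D
  | 0 => monotoneOn_id
  | k + 1 => by
    rw [Function.iterate_succ']
    exact hf.comp (hf.iterate hmaps k) (hmaps.iterate k)

section OrderedModule

variable {E : Type*} [AddCommGroup E] [PartialOrder E] [Module ℝ E] {D : Set E} {f : E → E}
  {v : E}

theorem ConvexOn.iterate_combo_le (hf : ConvexOn ℝ D f) (hmono : MonotoneOn f D)
    (hmaps : MapsTo f D D) (hv : v ∈ D) (hfix : f v = v) {y : E} (hy : y ∈ D) {t : ℝ}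
    (ht₀ : 0 ≤ t) (ht₁ : t ≤ 1) :
    ∀ k, f^[k] ((1 - t) • v + t • y) ≤ (1 - t) • v + t • f^[k] y
  | 0 => le_rfl
  | k + 1 => by
    have hcombo : ∀ {z}, z ∈ D → (1 - t) • v + t • z ∈ D :=
      fun hz => hf.1 hv hz (by linarith) ht₀ (by ring)
    rw [Function.iterate_succ_apply', Function.iterate_succ_apply']
    calc f (f^[k] ((1 - t) • v + t • y)) ≤ f ((1 - t) • v + t • f^[k] y) :=
          hmono (hmaps.iterate k (hcombo hy)) (hcombo (hmaps.iterate k hy))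
            (hf.iterate_combo_le hmono hmaps hv hfix hy ht₀ ht₁ k)
      _ ≤ (1 - t) • f v + t • f (f^[k] y) :=
          hf.2 hv (hmaps.iterate k hy) (by linarith) ht₀ (by ring)
      _ = (1 - t) • v + t • f (f^[k] y) := by rw [hfix]

variable [IsOrderedAddMonoid E] [PosSMulMono ℝ E]

theorem ConvexOn.two_smul_map_sub_le (hf : ConvexOn ℝ D f) {w : E} (hw : w ∈ D)
    (hw' : 2 • v - w ∈ D) : 2 • f v - f w ≤ f (2 • v - w) := by
  have hmid : (1 / 2 : ℝ) • (2 • v - w) + (1 / 2 : ℝ) • w = v := by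
    rw [← smul_add, sub_add_cancel, ← Nat.cast_smul_eq_nsmul ℝ, smul_smul]
    norm_num
  have h := hf.2 hw' hw (by norm_num) (by norm_num) (by norm_num : (1 / 2 : ℝ) + 1 / 2 = 1)
  rw [hmid, ← smul_add] at h
  have h2 := smul_le_smul_of_nonneg_left h (zero_le_two : (0 : ℝ) ≤ 2)
  rw [smul_smul, show (2 : ℝ) * (1 / 2) = 1 by norm_num, one_smul, ofNat_smul_eq_nsmul] at h2
  exact sub_le_iff_le_add.2 h2

theorem ConvexOn.two_smul_sub_iterate_le (hf : ConvexOn ℝ D f) (hmono : MonotoneOn f D)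
    (hmaps : MapsTo f D D) (hfix : f v = v) {q : E} (hq : q ∈ D)
    (hrefl : ∀ k, 2 • v - f^[k] q ∈ D) : ∀ k, 2 • v - f^[k] q ≤ f^[k] (2 • v - q)
  | 0 => le_rfl
  | k + 1 => by
    rw [Function.iterate_succ_apply', Function.iterate_succ_apply']
    calc 2 • v - f (f^[k] q) = 2 • f v - f (f^[k] q) := by rw [hfix]
      _ ≤ f (2 • v - f^[k] q) := hf.two_smul_map_sub_le (hmaps.iterate k hq) (hrefl k)
      _ ≤ f (f^[k] (2 • v - q)) :=
          hmono (hrefl k) (hmaps.iterate k (hrefl 0))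
            (hf.two_smul_sub_iterate_le hmono hmaps hfix hq hrefl k)

end OrderedModule

section Pi

variable {ι : Type*} [Fintype ι] {D : Set (ι → ℝ)} {f : (ι → ℝ) → ι → ℝ} {u v y : ι → ℝ}

theorem norm_sub_le_of_two_smul_sub_le_of_le (h₁ : 2 • v - u ≤ y) (h₂ : y ≤ u) :
    ‖y - v‖ ≤ ‖u - v‖ :=
  (pi_norm_le_iff_of_nonneg (norm_nonneg _)).2 fun i => by
    have hlo := h₁ i
    have hhi := h₂ i
    simp only [Pi.sub_apply, two_nsmul, Pi.add_apply] at hlo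
    calc ‖(y - v) i‖ ≤ u i - v i := by
          rw [Pi.sub_apply, Real.norm_eq_abs, abs_le]
          constructor <;> linarith
      _ ≤ ‖(u - v) i‖ := le_abs_self _
      _ ≤ ‖u - v‖ := norm_le_pi_norm _ i

theorem norm_sub_le_mul_norm_sub_of_le_combo {z : ι → ℝ} {t : ℝ} (ht : 0 ≤ t)
    (hvu : v ≤ u) (hu : u ≤ (1 - t) • v + t • z) : ‖u - v‖ ≤ t * ‖z - v‖ :=
  (pi_norm_le_iff_of_nonneg (by positivity)).2 fun i => by
    have hlo := hvu i
    have hhi := hu i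
    simp only [Pi.add_apply, Pi.smul_apply, smul_eq_mul] at hhi
    calc ‖(u - v) i‖ = u i - v i := by
          rw [Pi.sub_apply, Real.norm_eq_abs, abs_of_nonneg (by linarith)]
      _ ≤ t * (z i - v i) := by linarith
      _ ≤ t * ‖(z - v) i‖ := mul_le_mul_of_nonneg_left (le_abs_self _) ht
      _ ≤ t * ‖z - v‖ := mul_le_mul_of_nonneg_left (norm_le_pi_norm _ i) ht

theorem ConvexOn.norm_iterate_combo_sub_le (hf : ConvexOn ℝ D f)
    (hmono : MonotoneOn f D) (hmaps : MapsTo f D D) (hv : v ∈ D) (hfix : f v = v) {b : ι → ℝ}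
    (hb : b ∈ D) (hvb : v ≤ b) {t : ℝ} (ht₀ : 0 ≤ t) (ht₁ : t ≤ 1) (k : ℕ) :
    ‖f^[k] ((1 - t) • v + t • b) - v‖ ≤ t * ‖f^[k] b - v‖ := by
  have hvu : v ≤ (1 - t) • v + t • b := fun i => by
    have := hvb i
    simp only [Pi.add_apply, Pi.smul_apply, smul_eq_mul]
    nlinarith
  have hu : (1 - t) • v + t • b ∈ D := hf.1 hv hb (by linarith) ht₀ (by ring)
  refine norm_sub_le_mul_norm_sub_of_le_combo ht₀ ?_
    (hf.iterate_combo_le hmono hmaps hv hfix hb ht₀ ht₁ k)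
  simpa only [Function.iterate_fixed hfix] using (hmono.iterate hmaps k) hv hu hvu

theorem ConvexOn.norm_iterate_sub_le_of_mem_Icc (hf : ConvexOn ℝ D f)
    (hmono : MonotoneOn f D) (hmaps : MapsTo f D D) (hfix : f v = v) (hu : u ∈ D)
    (hrefl : ∀ k, 2 • v - f^[k] u ∈ D) (hy : y ∈ D) (hyu : y ∈ Icc (2 • v - u) u) (k : ℕ) :
    ‖f^[k] y - v‖ ≤ ‖f^[k] u - v‖ := by
  have hmono_k := hmono.iterate hmaps k
  refine norm_sub_le_of_two_smul_sub_le_of_le ?_ (hmono_k hy hu hyu.2)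
  exact (hf.two_smul_sub_iterate_le hmono hmaps hfix hu hrefl k).trans
    (hmono_k (hrefl 0) hy hyu.1)

theorem add_const_mem_closedBall {δ : ℝ} (hδ : 0 ≤ δ) : (v + fun _ => δ) ∈ closedBall v δ := by
  rw [mem_closedBall_iff_norm, add_sub_cancel_left]
  exact (pi_norm_le_iff_of_nonneg hδ).2 fun _ => by simp [abs_of_nonneg hδ]

theorem ConvexOn.norm_iterate_sub_le_of_mem_closedBall (hf : ConvexOn ℝ D f)
    (hmono : MonotoneOn f D) (hmaps : MapsTo f D D) (hv : v ∈ D) (hfix : f v = v) {δ t : ℝ}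
    (hδ : 0 ≤ δ) (hδD : closedBall v δ ⊆ D) (ht₀ : 0 ≤ t) (ht₁ : t ≤ 1)
    (hsmall : ∀ k, t * ‖f^[k] (v + fun _ => δ) - v‖ ≤ δ) (hy : y ∈ closedBall v (t * δ))
    (k : ℕ) : ‖f^[k] y - v‖ ≤ t * ‖f^[k] (v + fun _ => δ) - v‖ := by
  set b : ι → ℝ := v + fun _ => δ with hb_def
  set u := (1 - t) • v + t • b with hu_def
  have hb : b ∈ D := hδD (add_const_mem_closedBall hδ)
  have hvb : v ≤ b := fun i => by simp [b, hδ]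
  have hu : u ∈ D := hf.1 hv hb (by linarith) ht₀ (by ring)
  have hupper : ∀ k, ‖f^[k] u - v‖ ≤ t * ‖f^[k] b - v‖ :=
    hf.norm_iterate_combo_sub_le hmono hmaps hv hfix hb hvb ht₀ ht₁
  have hrefl : ∀ k, 2 • v - f^[k] u ∈ D := fun k => hδD <| by
    rw [mem_closedBall_iff_norm, two_nsmul, add_sub_right_comm, add_sub_cancel_right,
      norm_sub_rev]
    exact (hupper k).trans (hsmall k)
  have hyu : y ∈ Icc (2 • v - u) u := by
    have hyi : ∀ i, |y i - v i| ≤ t * δ := fun i =>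
      (Real.dist_eq _ _ ▸ dist_le_pi_dist y v i).trans (mem_closedBall.1 hy)
    constructor <;> intro i <;> have := abs_le.1 (hyi i) <;>
      simp only [hu_def, hb_def, two_nsmul, Pi.add_apply, Pi.sub_apply, Pi.smul_apply,
        smul_eq_mul] <;> linarith
  have hyD : y ∈ D := hδD (closedBall_subset_closedBall (mul_le_of_le_one_left hδ ht₁) hy)
  exact (hf.norm_iterate_sub_le_of_mem_Icc hmono hmaps hfix hu hrefl hyD hyu k).trans (hupper k)

end Pi

theorem exists_pos_le_one_mul_le (C : ℝ) {m : ℝ} (hm : 0 < m) :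
    ∃ t : ℝ, 0 < t ∧ t ≤ 1 ∧ t * C ≤ m := by
  have hC : Tendsto (fun t : ℝ => t * C) (𝓝[>] 0) (𝓝 0) := by
    simpa using ((continuous_mul_const C).tendsto 0).mono_left nhdsWithin_le_nhds
  obtain ⟨t, ⟨htC, ht₁⟩, ht₀⟩ := ((hC.eventually (ge_mem_nhds hm)).and
    (nhdsWithin_le_nhds (ge_mem_nhds zero_lt_one))) |>.and self_mem_nhdsWithin |>.exists
  exact ⟨t, ht₀, ht₁, htC⟩

theorem stmt4_general {n : ℕ} (D : Set (Fin n → ℝ)) (hDc : Convex ℝ D)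
    (f : (Fin n → ℝ) → (Fin n → ℝ)) (hmaps : Set.MapsTo f D D)
    (hconv : ∀ i, ConvexOn ℝ D (fun x => f x i))
    (hmono : ∀ x ∈ D, ∀ y ∈ D, x ≤ y → f x ≤ f y)
    (v : Fin n → ℝ) (hv : v ∈ D) (hfix : f v = v)
    (V : Set (Fin n → ℝ)) (hV : V ∈ 𝓝 v) (hVD : V ⊆ D)
    (hbdd : ∀ x ∈ V, ∃ c : ℝ, ∀ k : ℕ, ‖f^[k] x‖ ≤ c) :
    ∀ U ∈ 𝓝 v, ∃ W ∈ 𝓝 v, W ⊆ D ∧ ∀ x ∈ W, ∀ k : ℕ, 1 ≤ k → f^[k] x ∈ U := by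
  have hf : ConvexOn ℝ D f := convexOn_pi hDc hconv
  have hmonoOn : MonotoneOn f D := fun x hx y hy => hmono x hx y hy
  intro U hU
  obtain ⟨δ, hδ, hδV⟩ := nhds_basis_closedBall.mem_iff.1 hV
  obtain ⟨ε, hε, hεU⟩ := nhds_basis_closedBall.mem_iff.1 hU
  have hδD : closedBall v δ ⊆ D := hδV.trans hVD
  obtain ⟨c, hc⟩ := hbdd _ (hδV (add_const_mem_closedBall hδ.le))
  obtain ⟨t, ht₀, ht₁, htc⟩ := exists_pos_le_one_mul_le (c + ‖v‖) (lt_min hε hδ)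
  have horbit : ∀ k, t * ‖f^[k] (v + fun _ => δ) - v‖ ≤ min ε δ := fun k =>
    calc t * ‖f^[k] (v + fun _ => δ) - v‖ ≤ t * (c + ‖v‖) := by
          gcongr; exact (norm_sub_le _ _).trans (by gcongr; exact hc k)
      _ ≤ min ε δ := htc
  refine ⟨closedBall v (t * δ), closedBall_mem_nhds v (by positivity),
    (closedBall_subset_closedBall (mul_le_of_le_one_left hδ.le ht₁)).trans hδD,
    fun x hx k _ => hεU ?_⟩
  rw [mem_closedBall_iff_norm]
  exact (hf.norm_iterate_sub_le_of_mem_closedBall hmonoOn hmaps hv hfix hδ.le hδD ht₀.le ht₁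
    (fun k => (horbit k).trans (min_le_right _ _)) hx k).trans
    ((horbit k).trans (min_le_left _ _))

/-- for a convex monotone self-map of an open convex set with a fixed
point v, if all orbits of points in some neighbourhood of v are bounded, then v is a
Lyapunov stable fixed point. -/
theorem stmt4 {n : ℕ} (D : Set (Fin n → ℝ)) (hDo : IsOpen D) (hDc : Convex ℝ D)
    (f : (Fin n → ℝ) → (Fin n → ℝ)) (hmaps : Set.MapsTo f D D)
    (hconv : ∀ i, ConvexOn ℝ D (fun x => f x i))
    (hmono : ∀ x ∈ D, ∀ y ∈ D, x ≤ y → f x ≤ f y)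
    (v : Fin n → ℝ) (hv : v ∈ D) (hfix : f v = v)
    (V : Set (Fin n → ℝ)) (hV : V ∈ 𝓝 v) (hVD : V ⊆ D)
    (hbdd : ∀ x ∈ V, ∃ c : ℝ, ∀ k : ℕ, ‖f^[k] x‖ ≤ c) :
    ∀ U ∈ 𝓝 v, ∃ W ∈ 𝓝 v, W ⊆ D ∧ ∀ x ∈ W, ∀ k : ℕ, 1 ≤ k → f^[k] x ∈ U :=
  stmt4_general D hDc f hmaps hconv hmono v hv hfix V hV hVD hbdd
end
end

section
/- Let f : D → D be a convex monotone map with fixed point v (D ⊆ ℝ^n open convex). If some P ∈ ∂f(v) is stable, then every orbit of f'_v is bounded from below; consequently every orbit of f itself is bounded from below. -/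
noncomputable section
open Filter Topology Set
open scoped Classical

/-! Monotonicity of `f` on a neighbourhood of `v` forces `P ≥ 0`, so `y ↦ P y` is monotone.
The subgradient inequality gives `P y ≤ f'_v y` and `v + P (y - v) ≤ f y` on `D`; iterating these
comparisons bounds the orbits of `f'_v` and `f` from below by `P^k x` and `v + P^k (x - v)`,
which are bounded because `P` is stable. -/

open Matrix

theorem Monotone.iterate_le_iterate_of_le_on {α : Type*} [Preorder α] {s : Set α}
    {A B : α → α} (hA : Monotone A) (hB : MapsTo B s s) (hAB : ∀ y ∈ s, A y ≤ B y)
    {x : α} (hx : x ∈ s) (k : ℕ) : A^[k] x ≤ B^[k] x := by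
  induction k with
  | zero => rfl
  | succ k ih =>
    rw [Function.iterate_succ_apply', Function.iterate_succ_apply']
    exact (hA ih).trans (hAB _ (hB.iterate k hx))

namespace Matrix

variable {m n R : Type*} [Fintype n]

theorem mulVec_monotone_of_nonneg [Semiring R] [PartialOrder R] [IsOrderedRing R]
    {P : Matrix m n R} (hP : ∀ i j, 0 ≤ P i j) : Monotone P.mulVec :=
  fun _ _ h i => dotProduct_le_dotProduct_of_nonneg_left h (hP i)

variable [DecidableEq n]

theorem mulVec_iterate [CommSemiring R] (P : Matrix n n R) (x : n → R) (k : ℕ) :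
    P.mulVec^[k] x = (P ^ k) *ᵥ x := by
  induction k with
  | zero => simp
  | succ k ih => rw [Function.iterate_succ_apply', ih, pow_succ', mulVec_mulVec]

theorem affine_mulVec_iterate [CommRing R] (P : Matrix n n R) (v x : n → R) (k : ℕ) :
    (fun y => v + P *ᵥ (y - v))^[k] x = v + (P ^ k) *ᵥ (x - v) := by
  induction k with
  | zero => simp
  | succ k ih =>
    rw [Function.iterate_succ_apply', ih, add_sub_cancel_left, mulVec_mulVec, ← pow_succ']

end Matrix

theorem MatStable.exists_neg_le_pow_mulVec {ι : Type*} [Fintype ι] [DecidableEq ι]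
    {P : Matrix ι ι ℝ} (hP : MatStable P) (x : ι → ℝ) :
    ∃ c : ℝ, ∀ k i, -c ≤ ((P ^ k) *ᵥ x) i := by
  obtain ⟨c, hc⟩ := hP x
  refine ⟨c, fun k i => ?_⟩
  have h := (norm_le_pi_norm ((P ^ k) *ᵥ x) i).trans (hc k)
  rw [Real.norm_eq_abs] at h
  exact (neg_le_neg h).trans (neg_abs_le _)

section Subdiff

variable {m n : ℕ} {f : (Fin m → ℝ) → (Fin n → ℝ)} {D : Set (Fin m → ℝ)}
  {v : Fin m → ℝ} {P : Matrix (Fin n) (Fin m) ℝ}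

theorem eventually_add_smul_mem_of_mem_nhds (hD : D ∈ 𝓝 v) (y : Fin m → ℝ) :
    ∀ᶠ ε in 𝓝[>] (0 : ℝ), v + ε • y ∈ D := by
  have hc : ContinuousAt (fun ε : ℝ => v + ε • y) 0 := by fun_prop
  exact nhdsWithin_le_nhds (hc.preimage_mem_nhds (by simpa using hD))

theorem nonneg_of_mem_subdiff (hD : D ∈ 𝓝 v) (hmono : MonotoneOn f D)
    (hP : P ∈ Subdiff f D v) (i : Fin n) (j : Fin m) : 0 ≤ P i j := by
  let e : Fin m → ℝ := Pi.single j 1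
  obtain ⟨ε, hεD, hε : (0 : ℝ) < ε⟩ :=
    ((eventually_add_smul_mem_of_mem_nhds hD (-e)).and self_mem_nhdsWithin).exists
  -- Moving down from `v` along `e_j` cannot increase `f`, so `-ε P_ij ≤ 0`.
  have hdown : v + ε • -e ≤ v :=
    add_le_of_nonpos_right (smul_nonpos_of_nonneg_of_nonpos hε.le
      (neg_nonpos.mpr (Pi.single_nonneg.mpr zero_le_one)))
  have h := (hP _ hεD i).trans (sub_nonpos.mpr (hmono hεD (mem_of_mem_nhds hD) hdown i))
  simp only [add_sub_cancel_left, mulVec_smul, mulVec_neg, e, mulVec_single_one, Pi.smul_apply,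
    Pi.neg_apply, col_apply, smul_eq_mul, mul_neg, neg_nonpos] at h
  exact nonneg_of_mul_nonneg_right h hε

theorem mulVec_le_of_mem_subdiff_of_tendsto (hD : D ∈ 𝓝 v) (hP : P ∈ Subdiff f D v)
    {y : Fin m → ℝ} {d : Fin n → ℝ}
    (hd : Tendsto (fun ε : ℝ => ε⁻¹ • (f (v + ε • y) - f v)) (𝓝[>] 0) (𝓝 d)) :
    P *ᵥ y ≤ d := by
  refine ge_of_tendsto hd ?_
  filter_upwards [eventually_add_smul_mem_of_mem_nhds hD y, self_mem_nhdsWithin]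
    with ε hεD (hε : 0 < ε)
  have h := hP _ hεD
  rw [add_sub_cancel_left, mulVec_smul] at h
  rwa [le_inv_smul_iff_of_pos hε]

end Subdiff

theorem affine_le_of_mem_subdiff {n : ℕ} {f : (Fin n → ℝ) → (Fin n → ℝ)}
    {D : Set (Fin n → ℝ)} {v : Fin n → ℝ} {P : Matrix (Fin n) (Fin n) ℝ}
    (hP : P ∈ Subdiff f D v) (hfix : f v = v) (y : Fin n → ℝ) (hy : y ∈ D) :
    v + P *ᵥ (y - v) ≤ f y :=
  le_sub_iff_add_le'.mp (by simpa only [hfix] using hP y hy)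

theorem stmt6_general {n : ℕ} (D : Set (Fin n → ℝ)) (hDo : IsOpen D)
    (f : (Fin n → ℝ) → (Fin n → ℝ)) (hmaps : Set.MapsTo f D D)
    (hmono : ∀ x ∈ D, ∀ y ∈ D, x ≤ y → f x ≤ f y)
    (v : Fin n → ℝ) (hv : v ∈ D) (hfix : f v = v)
    (g : (Fin n → ℝ) → (Fin n → ℝ))
    (hg : ∀ y : Fin n → ℝ,
      Tendsto (fun ε : ℝ => ε⁻¹ • (f (v + ε • y) - f v)) (𝓝[>] (0:ℝ)) (𝓝 (g y)))
    (P : Matrix (Fin n) (Fin n) ℝ) (hP : P ∈ Subdiff f D v) (hPstab : MatStable P) :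
    (∀ x : Fin n → ℝ, ∃ l : Fin n → ℝ, ∀ k : ℕ, l ≤ g^[k] x) ∧
    (∀ x ∈ D, ∃ l : Fin n → ℝ, ∀ k : ℕ, l ≤ f^[k] x) := by
  have hDv : D ∈ 𝓝 v := hDo.mem_nhds hv
  have hPmono := mulVec_monotone_of_nonneg (nonneg_of_mem_subdiff hDv hmono hP)
  constructor
  · intro x
    obtain ⟨c, hc⟩ := hPstab.exists_neg_le_pow_mulVec x
    refine ⟨fun _ => -c, fun k i => (hc k i).trans ?_⟩
    have h := hPmono.iterate_le_of_le
      (fun y => mulVec_le_of_mem_subdiff_of_tendsto hDv hP (hg y)) k x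
    rw [mulVec_iterate] at h
    exact h i
  · intro x hx
    obtain ⟨c, hc⟩ := hPstab.exists_neg_le_pow_mulVec (x - v)
    refine ⟨v + fun _ => -c, fun k i => ?_⟩
    have hAmono : Monotone fun y => v + P *ᵥ (y - v) :=
      fun y y' h => add_le_add_right (hPmono (sub_le_sub_right h v)) v
    have h := hAmono.iterate_le_iterate_of_le_on hmaps (affine_le_of_mem_subdiff hP hfix) hx k
    rw [affine_mulVec_iterate] at h
    exact (add_le_add_right (hc k i) (v i)).trans (h i)

/-- if some matrix in the subdifferential of f at a fixed point v is
stable, then every orbit of the directional derivative map is bounded from below,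
and consequently every orbit of f is bounded from below. -/
theorem stmt6 {n : ℕ} (D : Set (Fin n → ℝ)) (hDo : IsOpen D) (hDc : Convex ℝ D)
    (f : (Fin n → ℝ) → (Fin n → ℝ)) (hmaps : Set.MapsTo f D D)
    (hconv : ∀ i, ConvexOn ℝ D (fun x => f x i))
    (hmono : ∀ x ∈ D, ∀ y ∈ D, x ≤ y → f x ≤ f y)
    (v : Fin n → ℝ) (hv : v ∈ D) (hfix : f v = v)
    (g : (Fin n → ℝ) → (Fin n → ℝ))
    (hg : ∀ y : Fin n → ℝ,
      Tendsto (fun ε : ℝ => ε⁻¹ • (f (v + ε • y) - f v)) (𝓝[>] (0:ℝ)) (𝓝 (g y)))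
    (P : Matrix (Fin n) (Fin n) ℝ) (hP : P ∈ Subdiff f D v) (hPstab : MatStable P) :
    (∀ x : Fin n → ℝ, ∃ l : Fin n → ℝ, ∀ k : ℕ, l ≤ g^[k] x) ∧
    (∀ x ∈ D, ∃ l : Fin n → ℝ, ∀ k : ℕ, l ≤ f^[k] x) :=
  stmt6_general D hDo f hmaps hmono v hv hfix g hg P hP hPstab
end
end

section
/- If P is a nonnegative stable matrix and C, C' are two distinct critical classes of P, then no node of C has access to any node of C' in the directed graph of P. -/
noncomputable section
open Filter Topology Set
open scoped Classical

/-!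
Suppose `i ∈ C` has access to `j ∈ C'`. The set `U` of nodes with access to `i` contains `C` and
misses `C'`, so a path from `i` to `j` leaves `U` along some edge `u → w`. Let `B` and `D` be the
diagonal blocks of `P` on `U` and on its complement. Walks that stay in `U`, cross `u → w` once
and then stay outside `U` are distinct walks of `P`, so
`(P ^ (N + 1)) a b ≥ ∑_{k + l = N} (B ^ k) a u * P u w * (D ^ l) w b`.

An eigenvalue of modulus `1` of `P_CC` gives a row of `P_CC ^ k` of mass at least `1` for every
`k`. Since every node of `C` reaches `u` inside `U`, the Cesàro sums `∑_{k < L} (B ^ k) a u` over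
`a ∈ C` grow linearly in `L`, and likewise the sums `∑_{l < L} (D ^ l) w b` over `b ∈ C'`. Hence
`∑_{N < 2L} P ^ (N + 1)` summed over `C × C'` grows quadratically in `L`, whereas stability bounds
it linearly.
-/

open Finset

lemma sum_range_product_le_sum_range_antidiagonal {M : Type*} [AddCommMonoid M] [PartialOrder M]
    [IsOrderedAddMonoid M] {f : ℕ × ℕ → M} (hf : ∀ x, 0 ≤ f x) (L : ℕ) :
    ∑ x ∈ range L ×ˢ range L, f x ≤ ∑ N ∈ range (2 * L), ∑ x ∈ antidiagonal N, f x := by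
  rw [← sum_fiberwise_of_maps_to (g := fun x => x.1 + x.2) (t := range (2 * L))]
  · refine sum_le_sum fun N _ => sum_le_sum_of_subset_of_nonneg ?_ fun x _ _ => hf x
    intro x hx
    simp only [mem_filter] at hx
    exact mem_antidiagonal.mpr hx.2
  · intro x hx
    simp only [Finset.mem_product, Finset.mem_range] at hx ⊢
    omega

lemma sum_range_add_le_sum_range {f : ℕ → ℝ} (hf : ∀ k, 0 ≤ f k) {q p : ℕ} (hqp : q ≤ p)
    (M : ℕ) : ∑ k ∈ range M, f (q + k) ≤ ∑ k ∈ range (M + p), f k :=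
  calc ∑ k ∈ range M, f (q + k) ≤ ∑ k ∈ range (q + M), f k := by
        rw [sum_range_add]
        exact le_add_of_nonneg_left (sum_nonneg fun k _ => hf k)
    _ ≤ ∑ k ∈ range (M + p), f k :=
        sum_le_sum_of_subset_of_nonneg (range_subset_range.mpr (by omega)) fun k _ _ => hf k

lemma not_forall_mul_sq_le_linear {c A B : ℝ} (hc : 0 < c) :
    ¬ ∀ M : ℕ, c * M ^ 2 ≤ A * M + B := by
  intro h
  obtain ⟨M, hM⟩ := exists_nat_gt ((|A| + |B|) / c + 1)
  have hM1 : (1 : ℝ) ≤ M := by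
    have : 0 ≤ (|A| + |B|) / c := by positivity
    linarith
  have hcM : |A| + |B| < c * M := by
    rw [div_add_one hc.ne', div_lt_iff₀ hc] at hM
    linarith
  nlinarith [h M, le_abs_self A, le_abs_self B, abs_nonneg A, abs_nonneg B]

namespace Matrix

section OrderedSemiring

variable {ι α : Type*} [Fintype ι] [Semiring α] [PartialOrder α] [IsOrderedRing α]

lemma mul_apply_nonneg {A B : Matrix ι ι α} (hA : ∀ i j, 0 ≤ A i j) (hB : ∀ i j, 0 ≤ B i j)
    (i j : ι) : 0 ≤ (A * B) i j :=
  sum_nonneg fun k _ => mul_nonneg (hA i k) (hB k j)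

lemma mul_apply_le_mul_apply {A A' B B' : Matrix ι ι α} (hA : ∀ i j, 0 ≤ A i j)
    (hB : ∀ i j, 0 ≤ B i j) (hAA' : ∀ i j, A i j ≤ A' i j) (hBB' : ∀ i j, B i j ≤ B' i j)
    (i j : ι) : (A * B) i j ≤ (A' * B') i j :=
  sum_le_sum fun k _ => mul_le_mul (hAA' i k) (hBB' k j) (hB k j) ((hA i k).trans (hAA' i k))

lemma apply_mul_apply_le_mul_apply {A B : Matrix ι ι α} (hA : ∀ i j, 0 ≤ A i j)
    (hB : ∀ i j, 0 ≤ B i j) (i k j : ι) : A i k * B k j ≤ (A * B) i j :=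
  single_le_sum (f := fun k => A i k * B k j) (fun k _ => mul_nonneg (hA i k) (hB k j))
    (mem_univ k)

variable [DecidableEq ι]

theorem sum_antidiagonal_pow_mul_mul_pow_apply_add_pow_apply_le {B R D P : Matrix ι ι α}
    (hB : ∀ i j, 0 ≤ B i j) (hR : ∀ i j, 0 ≤ R i j) (hD : ∀ i j, 0 ≤ D i j)
    (hle : ∀ i j, B i j + R i j + D i j ≤ P i j) (N : ℕ) (a b : ι) :
    (∑ x ∈ antidiagonal N, B ^ x.1 * R * D ^ x.2) a b + (B ^ (N + 1)) a b ≤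
      (P ^ (N + 1)) a b := by
  set T : ℕ → Matrix ι ι α := fun m => ∑ x ∈ antidiagonal m, B ^ x.1 * R * D ^ x.2
  have hT : ∀ m i j, 0 ≤ T m i j := fun m i j => by
    simp only [T, sum_apply]
    exact sum_nonneg fun x _ => mul_apply_nonneg
      (mul_apply_nonneg (pow_apply_nonneg hB _) hR) (pow_apply_nonneg hD _) i j
  have hP : ∀ i j, 0 ≤ P i j := fun i j =>
    (add_nonneg (add_nonneg (hB i j) (hR i j)) (hD i j)).trans (hle i j)
  have hRB : ∀ i j, R i j + B i j ≤ P i j := fun i j =>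
    ((add_comm _ _).le.trans (le_add_of_nonneg_right (hD i j))).trans (hle i j)
  have hDP : ∀ i j, D i j ≤ P i j := fun i j =>
    (le_add_of_nonneg_left (add_nonneg (hB i j) (hR i j))).trans (hle i j)
  have hTsucc : ∀ m, T (m + 1) + B ^ (m + 2) = T m * D + B ^ (m + 1) * (R + B) := fun m => by
    simp only [T, Nat.sum_antidiagonal_succ', sum_mul, pow_succ, pow_zero, mul_one, mul_assoc]
    noncomm_ring
  induction N generalizing a b with
  | zero => simpa [T] using hRB a b
  | succ N ih =>
    rw [← add_apply, hTsucc, pow_succ P]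
    calc (T N * D + B ^ (N + 1) * (R + B)) a b
        ≤ (T N * P + B ^ (N + 1) * P) a b :=
          add_le_add (mul_apply_le_mul_apply (hT N) hD (fun _ _ => le_rfl) hDP a b)
            (mul_apply_le_mul_apply (pow_apply_nonneg hB _)
              (fun x y => add_nonneg (hR x y) (hB x y)) (fun _ _ => le_rfl) hRB a b)
      _ = ((T N + B ^ (N + 1)) * P) a b := by rw [add_mul]
      _ ≤ (P ^ (N + 1) * P) a b :=
          mul_apply_le_mul_apply (fun x y => add_nonneg (hT N x y) (pow_apply_nonneg hB _ x y))
            hP (fun x y => by simpa only [add_apply] using ih x y) (fun _ _ => le_rfl) a b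

theorem sum_antidiagonal_pow_mul_mul_pow_apply_le {B R D P : Matrix ι ι α}
    (hB : ∀ i j, 0 ≤ B i j) (hR : ∀ i j, 0 ≤ R i j) (hD : ∀ i j, 0 ≤ D i j)
    (hle : ∀ i j, B i j + R i j + D i j ≤ P i j) (N : ℕ) (a b : ι) :
    ∑ x ∈ antidiagonal N, (B ^ x.1 * R * D ^ x.2) a b ≤ (P ^ (N + 1)) a b := by
  rw [← sum_apply]
  exact le_of_add_le_of_nonneg_left
    (sum_antidiagonal_pow_mul_mul_pow_apply_add_pow_apply_le hB hR hD hle N a b)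
    (pow_apply_nonneg hB _ a b)

theorem sum_range_pow_apply_mul_mul_sum_range_pow_apply_le {B R D P : Matrix ι ι α}
    (hB : ∀ i j, 0 ≤ B i j) (hR : ∀ i j, 0 ≤ R i j) (hD : ∀ i j, 0 ≤ D i j)
    (hle : ∀ i j, B i j + R i j + D i j ≤ P i j) (L : ℕ) (a u w b : ι) :
    (∑ k ∈ range L, (B ^ k) a u) * R u w * ∑ l ∈ range L, (D ^ l) w b ≤
      ∑ N ∈ range (2 * L), (P ^ (N + 1)) a b := by
  have hBRD : ∀ k l, 0 ≤ (B ^ k * R * D ^ l) a b := fun k l =>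
    mul_apply_nonneg (mul_apply_nonneg (pow_apply_nonneg hB k) hR) (pow_apply_nonneg hD l) a b
  calc (∑ k ∈ range L, (B ^ k) a u) * R u w * ∑ l ∈ range L, (D ^ l) w b
      = ∑ x ∈ range L ×ˢ range L, (B ^ x.1) a u * R u w * (D ^ x.2) w b := by
        rw [sum_mul, sum_mul_sum, sum_product]
    _ ≤ ∑ x ∈ range L ×ˢ range L, (B ^ x.1 * R * D ^ x.2) a b :=
        sum_le_sum fun x _ =>
          (mul_le_mul_of_nonneg_right
              (apply_mul_apply_le_mul_apply (pow_apply_nonneg hB _) hR a u w)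
              (pow_apply_nonneg hD _ w b)).trans
            (apply_mul_apply_le_mul_apply (mul_apply_nonneg (pow_apply_nonneg hB _) hR)
              (pow_apply_nonneg hD _) a w b)
    _ ≤ ∑ N ∈ range (2 * L), ∑ x ∈ antidiagonal N, (B ^ x.1 * R * D ^ x.2) a b :=
        sum_range_product_le_sum_range_antidiagonal (fun x => hBRD x.1 x.2) L
    _ ≤ ∑ N ∈ range (2 * L), (P ^ (N + 1)) a b :=
        sum_le_sum fun N _ => sum_antidiagonal_pow_mul_mul_pow_apply_le hB hR hD hle N a b

lemma submatrix_pow_apply_le {κ : Type*} [Fintype κ] [DecidableEq κ] {X : Matrix ι ι α}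
    (hX : ∀ i j, 0 ≤ X i j) {f : κ → ι} (hf : Function.Injective f) (k : ℕ) (a b : κ) :
    (X.submatrix f f ^ k) a b ≤ (X ^ k) (f a) (f b) := by
  induction k generalizing b with
  | zero =>
    by_cases h : a = b
    · simp [h]
    · simp [h, hf.eq_iff]
  | succ k ih =>
    rw [pow_succ, pow_succ, mul_apply, mul_apply]
    calc ∑ c, (X.submatrix f f ^ k) a c * X.submatrix f f c b
        ≤ ∑ c, (X ^ k) (f a) (f c) * X (f c) (f b) :=
          sum_le_sum fun c _ => mul_le_mul_of_nonneg_right (ih c) (hX _ _)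
      _ = ∑ z ∈ univ.map ⟨f, hf⟩, (X ^ k) (f a) z * X z (f b) := by rw [sum_map]; rfl
      _ ≤ ∑ z, (X ^ k) (f a) z * X z (f b) :=
          sum_le_univ_sum_of_nonneg fun z => mul_nonneg (pow_apply_nonneg hX k _ z) (hX z _)

end OrderedSemiring

section Real

variable {ι : Type*} [Fintype ι] [DecidableEq ι]

/-- Different nodes of `S` may reach `u` only at different times; the Cesàro sums absorb this. -/
theorem exists_pos_mul_le_sum_sum_range_pow_apply {X : Matrix ι ι ℝ} (hX : ∀ i j, 0 ≤ X i j)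
    {S : Set ι} [Fintype S] {u : ι} (hmass : ∀ k, 1 ≤ ∑ a : S, ∑ c : S, (X ^ k) a c)
    (hreach : ∀ c ∈ S, ∃ p, 0 < (X ^ p) c u) :
    ∃ α > 0, ∃ p, ∀ M : ℕ, α * M ≤ ∑ a : S, ∑ k ∈ range (M + p), (X ^ k) a u := by
  choose! r hr using hreach
  have hS : (univ : Finset S).Nonempty := by
    by_contra h
    have := hmass 0
    rw [Finset.not_nonempty_iff_eq_empty.mp h, sum_empty] at this
    linarith
  obtain ⟨c₀, -, hc₀⟩ := exists_min_image univ (fun c : S => (X ^ r c) c u) hS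
  set δ := (X ^ r c₀) c₀ u
  have hδ : 0 < δ := hr _ c₀.2
  have hcard : (0 : ℝ) < Fintype.card S := Nat.cast_pos.mpr (card_pos.mpr hS)
  set p := univ.sup fun c : S => r c
  have hstep : ∀ k, δ ≤ ∑ c : S, ∑ a : S, (X ^ (r c + k)) a u := fun k =>
    calc δ ≤ δ * ∑ a : S, ∑ c : S, (X ^ k) a c := le_mul_of_one_le_right hδ.le (hmass k)
      _ = ∑ c : S, ∑ a : S, (X ^ k) a c * δ := by
        rw [mul_sum, sum_comm]
        exact sum_congr rfl fun c _ => by rw [mul_sum]; simp only [mul_comm]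
      _ ≤ ∑ c : S, ∑ a : S, (X ^ k) a c * (X ^ r c) c u :=
        sum_le_sum fun c _ => sum_le_sum fun a _ =>
          mul_le_mul_of_nonneg_left (hc₀ c (mem_univ c)) (pow_apply_nonneg hX k a c)
      _ ≤ ∑ c : S, ∑ a : S, (X ^ (r c + k)) a u :=
        sum_le_sum fun c _ => sum_le_sum fun a _ => by
          rw [add_comm, pow_add]
          exact apply_mul_apply_le_mul_apply (pow_apply_nonneg hX k) (pow_apply_nonneg hX _) a c u
  refine ⟨δ / Fintype.card S, div_pos hδ hcard, p, fun M => ?_⟩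
  rw [div_mul_eq_mul_div, div_le_iff₀ hcard]
  calc δ * M = ∑ _k ∈ range M, δ := by rw [sum_const, card_range, nsmul_eq_mul, mul_comm]
    _ ≤ ∑ k ∈ range M, ∑ c : S, ∑ a : S, (X ^ (r c + k)) a u := sum_le_sum fun k _ => hstep k
    _ = ∑ c : S, ∑ a : S, ∑ k ∈ range M, (X ^ (r c + k)) a u := by
        rw [sum_comm]; exact sum_congr rfl fun c _ => sum_comm
    _ ≤ ∑ _c : S, ∑ a : S, ∑ k ∈ range (M + p), (X ^ k) a u :=
        sum_le_sum fun c _ => sum_le_sum fun a _ =>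
          sum_range_add_le_sum_range (fun k => pow_apply_nonneg hX k a u)
            (le_sup (f := fun c : S => r c) (mem_univ c)) M
    _ = (∑ a : S, ∑ k ∈ range (M + p), (X ^ k) a u) * Fintype.card S := by
        rw [sum_const, card_univ, nsmul_eq_mul, mul_comm]

theorem exists_pos_mul_le_sum_sum_range_pow_apply' {X : Matrix ι ι ℝ} (hX : ∀ i j, 0 ≤ X i j)
    {S : Set ι} [Fintype S] {w : ι} (hmass : ∀ k, 1 ≤ ∑ a : S, ∑ c : S, (X ^ k) a c)
    (hreach : ∀ c ∈ S, ∃ p, 0 < (X ^ p) w c) :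
    ∃ α > 0, ∃ p, ∀ M : ℕ, α * M ≤ ∑ b : S, ∑ k ∈ range (M + p), (X ^ k) w b := by
  have hmass' : ∀ k, 1 ≤ ∑ a : S, ∑ c : S, (Xᵀ ^ k) a c := fun k => by
    simp only [← transpose_pow, transpose_apply]
    rw [sum_comm]
    exact hmass k
  have hreach' : ∀ c ∈ S, ∃ p, 0 < (Xᵀ ^ p) c w := by
    simpa only [← transpose_pow, transpose_apply] using hreach
  simpa only [← transpose_pow, transpose_apply] using
    exists_pos_mul_le_sum_sum_range_pow_apply (X := Xᵀ) (fun i j => hX j i) hmass' hreach'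

lemma exists_mem_spectrum_norm_eq_specRad (Q : Matrix ι ι ℝ) (h : SpecRad Q ≠ 0) :
    ∃ μ ∈ spectrum ℂ (Q.map (fun a => (a : ℂ))), ‖μ‖ = SpecRad Q := by
  have hQ : SpecRad Q = sSup ((‖·‖) '' spectrum ℂ (Q.map (fun a => (a : ℂ)))) := by
    rw [SpecRad, Subsingleton.elim (Classical.decEq ι) ‹_›]
    congr 1
    ext r
    exact ⟨fun ⟨μ, hμ, hr⟩ => ⟨μ, hμ, hr.symm⟩, fun ⟨μ, hμ, hr⟩ => ⟨μ, hμ, hr.symm⟩⟩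
  have hne : ((‖·‖) '' spectrum ℂ (Q.map (fun a => (a : ℂ)))).Nonempty := by
    by_contra hempty
    rw [Set.not_nonempty_iff_eq_empty] at hempty
    exact h (by rw [hQ, hempty, Real.sSup_empty])
  obtain ⟨μ, hμ, hμQ⟩ := hne.csSup_mem ((finite_spectrum _).image _)
  exact ⟨μ, hμ, hμQ.trans hQ.symm⟩

/-- `i` is where an eigenvector for `μ` has its largest coordinate. -/
lemma exists_forall_norm_pow_le_sum_pow_apply {Q : Matrix ι ι ℝ} (hQ : ∀ i j, 0 ≤ Q i j)
    {μ : ℂ} (hμ : μ ∈ spectrum ℂ (Q.map (fun a => (a : ℂ)))) :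
    ∃ i, ∀ k, ‖μ‖ ^ k ≤ ∑ j, (Q ^ k) i j := by
  rw [← spectrum_toLin', ← Module.End.hasEigenvalue_iff_mem_spectrum] at hμ
  obtain ⟨v, hv⟩ := hμ.exists_hasEigenvector
  have hpow : ∀ k, (Q ^ k).map (fun a => (a : ℂ)) *ᵥ v = μ ^ k • v := fun k => by
    rw [← toLin'_apply, ← hv.pow_apply, ← toLin'_pow]
    exact congrArg (toLin' · v) (Matrix.map_pow Q Complex.ofRealHom k)
  obtain ⟨j₀, hj₀⟩ := Function.ne_iff.mp hv.2
  obtain ⟨i, -, hi⟩ := exists_max_image univ (fun j => ‖v j‖) ⟨j₀, mem_univ _⟩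
  have hvi : 0 < ‖v i‖ := (norm_pos_iff.mpr hj₀).trans_le (hi j₀ (mem_univ _))
  refine ⟨i, fun k => le_of_mul_le_mul_right ?_ hvi⟩
  calc ‖μ‖ ^ k * ‖v i‖ = ‖∑ j, ((Q ^ k) i j : ℂ) * v j‖ := by
        rw [← norm_pow, ← norm_mul, ← smul_eq_mul, ← Pi.smul_apply, ← hpow]
        rfl
    _ ≤ ∑ j, (Q ^ k) i j * ‖v j‖ := by
        refine (norm_sum_le _ _).trans (le_of_eq (sum_congr rfl fun j _ => ?_))
        rw [norm_mul, Complex.norm_real, Real.norm_of_nonneg (pow_apply_nonneg hQ k i j)]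
    _ ≤ (∑ j, (Q ^ k) i j) * ‖v i‖ := by
        rw [sum_mul]
        exact sum_le_sum fun j _ =>
          mul_le_mul_of_nonneg_left (hi j (mem_univ j)) (pow_apply_nonneg hQ k i j)

end Real

section Block

variable {ι α : Type*}

def blockOf [Zero α] (S T : Set ι) (P : Matrix ι ι α) : Matrix ι ι α :=
  of fun x y => if x ∈ S ∧ y ∈ T then P x y else 0

lemma blockOf_apply_of_mem [Zero α] {P : Matrix ι ι α} {S T : Set ι} {x y : ι} (hx : x ∈ S)
    (hy : y ∈ T) : blockOf S T P x y = P x y := by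
  simp [blockOf, hx, hy]

lemma blockOf_nonneg [Zero α] [Preorder α] {P : Matrix ι ι α} (hP : ∀ i j, 0 ≤ P i j)
    (S T : Set ι) (i j : ι) : 0 ≤ blockOf S T P i j := by
  simp only [blockOf, of_apply]
  split_ifs
  exacts [hP i j, le_rfl]

lemma blockOf_add_blockOf_add_blockOf_le [AddZeroClass α] [Preorder α] {P : Matrix ι ι α}
    (hP : ∀ i j, 0 ≤ P i j) (U : Set ι) (i j : ι) :
    blockOf U U P i j + blockOf U Uᶜ P i j + blockOf Uᶜ Uᶜ P i j ≤ P i j := by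
  by_cases hi : i ∈ U <;> by_cases hj : j ∈ U <;> simp [blockOf, hi, hj, hP i j]

end Block

end Matrix

lemma MatStable.exists_pow_apply_le {ι : Type*} [Fintype ι] [DecidableEq ι]
    {P : Matrix ι ι ℝ} (h : MatStable P) : ∃ K, ∀ N a b, (P ^ N) a b ≤ K := by
  choose c hc using fun b => h (Pi.single b 1)
  refine ⟨∑ b, c b, fun N a b => ?_⟩
  calc (P ^ N) a b = ((P ^ N).mulVec (Pi.single b 1)) a := by simp
    _ ≤ ‖(P ^ N).mulVec (Pi.single b 1)‖ := (Real.le_norm_self _).trans (norm_le_pi_norm _ a)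
    _ ≤ c b := hc b N
    _ ≤ ∑ b, c b :=
        single_le_sum (f := c) (fun b _ => (norm_nonneg _).trans (hc b 0)) (mem_univ b)

theorem not_matStable_of_linear_growth {ι : Type*} [Fintype ι] [DecidableEq ι]
    {B R D P : Matrix ι ι ℝ} (hB : ∀ i j, 0 ≤ B i j) (hR : ∀ i j, 0 ≤ R i j)
    (hD : ∀ i j, 0 ≤ D i j) (hle : ∀ i j, B i j + R i j + D i j ≤ P i j) {u w : ι}
    (huw : 0 < R u w) {S T : Set ι} [Fintype S] [Fintype T] {α β : ℝ} (hα : 0 < α) (hβ : 0 < β)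
    {p q : ℕ} (hBS : ∀ M : ℕ, α * M ≤ ∑ a : S, ∑ k ∈ range (M + p), (B ^ k) a u)
    (hDT : ∀ M : ℕ, β * M ≤ ∑ b : T, ∑ l ∈ range (M + q), (D ^ l) w b) : ¬ MatStable P := by
  intro hP
  obtain ⟨K, hK⟩ := hP.exists_pow_apply_le
  set c : ℝ := 2 * Fintype.card S * Fintype.card T * K
  refine not_forall_mul_sq_le_linear (mul_pos (mul_pos huw hα) hβ) (A := c) (B := c * (p + q))
    fun M => ?_
  set L := M + p + q
  have hG : α * M ≤ ∑ a : S, ∑ k ∈ range L, (B ^ k) a u :=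
    (hBS M).trans <| sum_le_sum fun a _ => sum_le_sum_of_subset_of_nonneg
      (range_subset_range.mpr (by omega)) fun k _ _ => Matrix.pow_apply_nonneg hB k a u
  have hH : β * M ≤ ∑ b : T, ∑ l ∈ range L, (D ^ l) w b :=
    (hDT M).trans <| sum_le_sum fun b _ => sum_le_sum_of_subset_of_nonneg
      (range_subset_range.mpr (by omega)) fun l _ _ => Matrix.pow_apply_nonneg hD l w b
  calc R u w * α * β * M ^ 2 = R u w * (α * M) * (β * M) := by ring
    _ ≤ R u w * (∑ a : S, ∑ k ∈ range L, (B ^ k) a u) * ∑ b : T, ∑ l ∈ range L, (D ^ l) w b := by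
        have hG0 : 0 ≤ ∑ a : S, ∑ k ∈ range L, (B ^ k) a u :=
          (by positivity : (0 : ℝ) ≤ α * M).trans hG
        exact mul_le_mul (mul_le_mul_of_nonneg_left hG huw.le) hH (by positivity)
          (mul_nonneg huw.le hG0)
    _ = ∑ a : S, ∑ b : T,
          (∑ k ∈ range L, (B ^ k) a u) * R u w * ∑ l ∈ range L, (D ^ l) w b := by
        rw [mul_comm (R u w), Finset.sum_mul univ _ (R u w), sum_mul_sum]
    _ ≤ ∑ _a : S, ∑ _b : T, ∑ _N ∈ range (2 * L), K :=
        sum_le_sum fun a _ => sum_le_sum fun b _ =>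
          (Matrix.sum_range_pow_apply_mul_mul_sum_range_pow_apply_le hB hR hD hle L a u w b).trans
            (sum_le_sum fun N _ => hK _ a b)
    _ = c * M + c * (p + q) := by
        simp only [sum_const, card_univ, card_range, nsmul_eq_mul, c, L]
        push_cast
        ring

theorem one_le_sum_sum_pow_of_specRadOn_eq_one {n : ℕ} {P X : Matrix (Fin n) (Fin n) ℝ}
    {S : Set (Fin n)} [Fintype S] (hS : SpecRadOn P S = 1) (hX : ∀ i j, 0 ≤ X i j)
    (hXP : ∀ x ∈ S, ∀ y ∈ S, X x y = P x y) (k : ℕ) :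
    1 ≤ ∑ a : S, ∑ c : S, (X ^ k) a c := by
  set Q : Matrix S S ℝ := X.submatrix (↑) (↑)
  have hQ : SpecRad Q = 1 := by
    rw [← hS, SpecRadOn, Subsingleton.elim (Fintype.ofFinite S) ‹_›]
    congr 1
    ext a c
    exact hXP a a.2 c c.2
  obtain ⟨μ, hμ, hμQ⟩ := Matrix.exists_mem_spectrum_norm_eq_specRad Q (by simp [hQ])
  obtain ⟨i, hi⟩ := Matrix.exists_forall_norm_pow_le_sum_pow_apply (Q := Q) (fun a c => hX a c) hμ
  calc (1 : ℝ) = ‖μ‖ ^ k := by rw [hμQ, hQ, one_pow]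
    _ ≤ ∑ c, (Q ^ k) i c := hi k
    _ ≤ ∑ c : S, (X ^ k) i c :=
        sum_le_sum fun c _ => Matrix.submatrix_pow_apply_le hX Subtype.val_injective k i c
    _ ≤ ∑ a : S, ∑ c : S, (X ^ k) a c :=
        single_le_sum (f := fun a : S => ∑ c : S, (X ^ k) a c)
          (fun a _ => sum_nonneg fun c _ => Matrix.pow_apply_nonneg hX k a c) (mem_univ i)

section Access

variable {n : ℕ} {P : Matrix (Fin n) (Fin n) ℝ}

lemma AccessM.trans {x y z : Fin n} (hxy : AccessM P x y) (hyz : AccessM P y z) :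
    AccessM P x z :=
  Relation.ReflTransGen.trans hxy hyz

lemma IsClass.access_of_mem {C : Set (Fin n)} (hC : IsClass P C) {x y : Fin n} (hx : x ∈ C)
    (hy : y ∈ C) : AccessM P x y := by
  obtain ⟨i₀, rfl⟩ := hC
  exact hx.2.trans hy.1

lemma IsClass.eq_of_access {C C' : Set (Fin n)} (hC : IsClass P C) (hC' : IsClass P C')
    {i j : Fin n} (hi : i ∈ C) (hj : j ∈ C') (hij : AccessM P i j) (hji : AccessM P j i) :
    C = C' := by
  obtain ⟨i₀, rfl⟩ := hC
  obtain ⟨j₀, rfl⟩ := hC'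
  have h₁ : AccessM P i₀ j₀ := hi.1.trans (hij.trans hj.2)
  have h₂ : AccessM P j₀ i₀ := hj.1.trans (hji.trans hi.2)
  ext x
  exact ⟨fun hx => ⟨h₂.trans hx.1, hx.2.trans h₁⟩, fun hx => ⟨h₁.trans hx.1, hx.2.trans h₂⟩⟩

lemma AccessM.exists_edge_mem_not_mem {U : Set (Fin n)} {i j : Fin n} (h : AccessM P i j)
    (hi : i ∈ U) (hj : j ∉ U) :
    ∃ u w, u ∈ U ∧ w ∉ U ∧ 0 < P u w ∧ AccessM P i u ∧ AccessM P w j := by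
  induction h using Relation.ReflTransGen.head_induction_on with
  | refl => exact absurd hi hj
  | @head a c hac hcj ih =>
    by_cases hc : c ∈ U
    · obtain ⟨u, w, hu, hw, huw, hcu, hwj⟩ := ih hc
      exact ⟨u, w, hu, hw, huw, .head hac hcu, hwj⟩
    · exact ⟨a, c, hi, hc, hac, .refl, hcj⟩

lemma AccessM.exists_pow_blockOf_pos (hP : ∀ i j, 0 ≤ P i j) {V : Set (Fin n)} {x y : Fin n}
    (h : AccessM P x y) (hV : ∀ z, AccessM P x z → AccessM P z y → z ∈ V) :
    ∃ p, 0 < (Matrix.blockOf V V P ^ p) x y := by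
  induction h with
  | refl => exact ⟨0, by simp⟩
  | @tail z y hxz hzy ih =>
    obtain ⟨p, hp⟩ := ih fun z' hxz' hz'z => hV z' hxz' (hz'z.tail hzy)
    have hz : z ∈ V := hV z hxz (.single hzy)
    have hy : y ∈ V := hV y (hxz.tail hzy) .refl
    have hzy' : 0 < Matrix.blockOf V V P z y := by rwa [Matrix.blockOf_apply_of_mem hz hy]
    refine ⟨p + 1, (mul_pos hp hzy').trans_le ?_⟩
    rw [pow_succ]
    have hblock := Matrix.blockOf_nonneg hP V V
    exact Matrix.apply_mul_apply_le_mul_apply (Matrix.pow_apply_nonneg hblock p) hblock x z y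

end Access

/-- distinct critical classes of a nonnegative stable matrix have no
access to one another. -/
theorem stmt7 {n : ℕ} (P : Matrix (Fin n) (Fin n) ℝ)
    (hpos : ∀ i j, 0 ≤ P i j) (hstab : MatStable P)
    (C C' : Set (Fin n)) (hC : IsCriticalClass P C) (hC' : IsCriticalClass P C')
    (hne : C ≠ C') :
    ∀ i ∈ C, ∀ j ∈ C', ¬ AccessM P i j := by
  intro i hi j hj hij
  set U : Set (Fin n) := {x | AccessM P x i}
  have hCU : ∀ c ∈ C, c ∈ U := fun c hc => hC.1.access_of_mem hc hi
  have hC'U : ∀ b ∈ C', b ∉ U := fun b hb hbi =>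
    hne (hC.1.eq_of_access hC'.1 hi hb (hij.trans (hC'.1.access_of_mem hj hb)) hbi)
  obtain ⟨u, w, hu, hw, huw, hiu, hwj⟩ := hij.exists_edge_mem_not_mem (U := U) .refl (hC'U j hj)
  have : Fintype C := .ofFinite C
  have : Fintype C' := .ofFinite C'
  have hblock := Matrix.blockOf_nonneg hpos
  have hmass : ∀ k, 1 ≤ ∑ a : C, ∑ c : C, (Matrix.blockOf U U P ^ k) a c :=
    one_le_sum_sum_pow_of_specRadOn_eq_one hC.2 (hblock U U) fun x hx y hy =>
      Matrix.blockOf_apply_of_mem (hCU x hx) (hCU y hy)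
  have hmass' : ∀ k, 1 ≤ ∑ a : C', ∑ c : C', (Matrix.blockOf Uᶜ Uᶜ P ^ k) a c :=
    one_le_sum_sum_pow_of_specRadOn_eq_one hC'.2 (hblock Uᶜ Uᶜ) fun x hx y hy =>
      Matrix.blockOf_apply_of_mem (hC'U x hx) (hC'U y hy)
  have hreach : ∀ c ∈ C, ∃ p, 0 < (Matrix.blockOf U U P ^ p) c u := fun c hc =>
    ((hC.1.access_of_mem hc hi).trans hiu).exists_pow_blockOf_pos hpos
      fun z _ hzu => hzu.trans hu
  have hreach' : ∀ b ∈ C', ∃ p, 0 < (Matrix.blockOf Uᶜ Uᶜ P ^ p) w b := fun b hb =>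
    (hwj.trans (hC'.1.access_of_mem hj hb)).exists_pow_blockOf_pos hpos
      fun z hwz _ hzi => hw (hwz.trans hzi)
  obtain ⟨α, hα, p, hgrowth⟩ :=
    Matrix.exists_pos_mul_le_sum_sum_range_pow_apply (hblock U U) hmass hreach
  obtain ⟨β, hβ, q, hgrowth'⟩ :=
    Matrix.exists_pos_mul_le_sum_sum_range_pow_apply' (hblock Uᶜ Uᶜ) hmass' hreach'
  exact not_matStable_of_linear_growth (hblock U U) (hblock U Uᶜ) (hblock Uᶜ Uᶜ)
    (Matrix.blockOf_add_blockOf_add_blockOf_le hpos U)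
    (by rwa [Matrix.blockOf_apply_of_mem hu hw]) hα hβ hgrowth hgrowth' hstab
end
end

section
/- Let P be a nonnegative stable n×n matrix, C the union of its critical classes, D the set of nodes not in C that some critical node has access to, U the set of nodes not in C having access to some critical node, and I the remaining nodes. Then U, C, D, I are pairwise disjoint, and the spectral radii of P_{UU}, P_{DD}, P_{II} are all strictly less than 1. -/
noncomputable section
open Filter Topology Set
open scoped Classical

/-!
For a nonnegative matrix, a principal submatrix `P_SS` has spectral radius at least `1` exactly
when some nonnegative nonzero `w` supported in `S` satisfies `w ≤ P w`: the moduli of an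
eigenvector give one direction, Gelfand's formula the other. Stability bounds every such radius
by `1`. Cutting `w` down to the nodes that a node `p` of its support reaches through the support,
with `p` chosen to reach as few nodes as possible, leaves a subinvariant vector inside the class
of `p`, which is therefore critical. Hence every set of nodes whose submatrix has spectral radius
`≥ 1` contains a critical node, which gives the bounds on `U`, `D` and `I`.

If a noncritical node `i` had access from a critical class `C₁` and to a critical class `C₂`,
take a vector `g ≥ 0` supported in `C₁` with `g ≤ g P`, and a vector `y ≥ 0` with `y ≤ P y` that
is positive at the first node outside the support of `g` on the path from `C₁` through `i` to
`C₂`. Then `g ⬝ P^k y` grows linearly in `k`, which contradicts stability; so `U ∩ D = ∅`.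
-/

open Matrix
open scoped ENNReal

namespace Matrix

variable {ι : Type*} [Fintype ι]

theorem mulVec_mono_of_nonneg {A : Matrix ι ι ℝ} (hA : ∀ i j, 0 ≤ A i j) {x y : ι → ℝ}
    (h : x ≤ y) : A *ᵥ x ≤ A *ᵥ y :=
  fun i => Finset.sum_le_sum fun j _ => mul_le_mul_of_nonneg_left (h j) (hA i j)

theorem mulVec_nonneg_of_nonneg {A : Matrix ι ι ℝ} (hA : ∀ i j, 0 ≤ A i j) {x : ι → ℝ}
    (hx : 0 ≤ x) : 0 ≤ A *ᵥ x := by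
  simpa using mulVec_mono_of_nonneg hA hx

theorem pow_smul_le_pow_mulVec [DecidableEq ι] {A : Matrix ι ι ℝ} (hA : ∀ i j, 0 ≤ A i j)
    {x : ι → ℝ} {r : ℝ} (hr : 0 ≤ r) (h : r • x ≤ A *ᵥ x) (k : ℕ) :
    r ^ k • x ≤ A ^ k *ᵥ x := by
  induction k with
  | zero => simp
  | succ k ih =>
    calc r ^ (k + 1) • x = r • r ^ k • x := by rw [pow_succ', mul_smul]
      _ ≤ r • (A ^ k *ᵥ x) := smul_le_smul_of_nonneg_left ih hr
      _ = A ^ k *ᵥ (r • x) := (mulVec_smul _ _ _).symm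
      _ ≤ A ^ k *ᵥ (A *ᵥ x) := mulVec_mono_of_nonneg (pow_apply_nonneg hA k) h
      _ = A ^ (k + 1) *ᵥ x := by rw [mulVec_mulVec, pow_succ]

theorem le_pow_mulVec [DecidableEq ι] {A : Matrix ι ι ℝ} (hA : ∀ i j, 0 ≤ A i j)
    {x : ι → ℝ} (h : x ≤ A *ᵥ x) (k : ℕ) : x ≤ A ^ k *ᵥ x := by
  simpa using pow_smul_le_pow_mulVec hA zero_le_one (by simpa using h) k

theorem submatrix_val_mulVec_comp_val {α : Type*} [NonUnitalNonAssocSemiring α]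
    (A : Matrix ι ι α) (S : Set ι) [Fintype S] {w : ι → α} (hw : Function.support w ⊆ S)
    (s : S) : (A.submatrix Subtype.val Subtype.val *ᵥ fun t : S => w t) s = (A *ᵥ w) s := by
  simp only [mulVec, dotProduct, submatrix_apply]
  rw [← Finset.sum_subtype (p := (· ∈ S)) (Finset.univ.filter (· ∈ S)) (by simp)
    (fun j => A s j * w j)]
  refine Finset.sum_filter_of_ne fun j _ h => hw fun hj => h ?_
  rw [hj, mul_zero]

theorem indicator_le_mulVec_indicator {A : Matrix ι ι ℝ} (hA : ∀ i j, 0 ≤ A i j)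
    {w : ι → ℝ} (hw0 : 0 ≤ w) (hw : w ≤ A *ᵥ w) {R : Set ι}
    (hR : ∀ i ∈ R, ∀ j, 0 < A i j → 0 < w j → j ∈ R) :
    R.indicator w ≤ A *ᵥ R.indicator w := by
  intro i
  by_cases hi : i ∈ R
  · refine (indicator_of_mem hi w).trans_le
      ((hw i).trans_eq (Finset.sum_congr rfl fun j _ => ?_))
    by_cases hj : j ∈ R
    · rw [indicator_of_mem hj]
    · rw [indicator_of_notMem hj, mul_zero]
      by_contra hne
      obtain ⟨hAij, hwj⟩ := mul_ne_zero_iff.1 hne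
      exact hj (hR i hi j ((hA i j).lt_of_ne' hAij) ((hw0 j).lt_of_ne' hwj))
  · rw [indicator_of_notMem hi]
    exact mulVec_nonneg_of_nonneg hA (indicator_nonneg fun j _ => hw0 j) i

theorem exists_le_mulVec_pos_of_reflTransGen {A : Matrix ι ι ℝ} (hA : ∀ i j, 0 ≤ A i j)
    {v : ι → ℝ} (hv0 : 0 ≤ v) (hv : v ≤ A *ᵥ v) {i j : ι}
    (hij : Relation.ReflTransGen (fun a b => 0 < A a b) i j) (hj : 0 < v j) :
    ∃ y : ι → ℝ, 0 ≤ y ∧ y ≤ A *ᵥ y ∧ 0 < y i := by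
  induction hij using Relation.ReflTransGen.head_induction_on with
  | refl => exact ⟨v, hv0, hv, hj⟩
  | @head a b hab _ ih =>
    obtain ⟨y, hy0, hy, hb⟩ := ih
    refine ⟨A *ᵥ y, mulVec_nonneg_of_nonneg hA hy0, mulVec_mono_of_nonneg hA hy, ?_⟩
    exact (mul_pos hab hb).trans_le (Finset.single_le_sum (f := fun l => A a l * y l)
      (fun l _ => mul_nonneg (hA a l) (hy0 l)) (Finset.mem_univ b))

theorem dotProduct_pow_mulVec_add_le [DecidableEq ι] {A : Matrix ι ι ℝ}
    (hA : ∀ i j, 0 ≤ A i j) {g y : ι → ℝ} (hg0 : 0 ≤ g) (hg : g ≤ g ᵥ* A) (hy0 : 0 ≤ y)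
    (hy : y ≤ A *ᵥ y) {c d : ι} (hd : g d = 0) (k : ℕ) :
    g ⬝ᵥ (A ^ k *ᵥ y) + g c * A c d * y d ≤ g ⬝ᵥ (A ^ (k + 1) *ᵥ y) := by
  set x := A ^ k *ᵥ y
  have hx0 : 0 ≤ x := mulVec_nonneg_of_nonneg (pow_apply_nonneg hA k) hy0
  -- the gain is at least the mass that `g ᵥ* A` puts on `d`, where `g` itself vanishes
  have hgd : g c * A c d ≤ (g ᵥ* A - g) d := by
    rw [Pi.sub_apply, hd, sub_zero]
    exact Finset.single_le_sum (f := fun j => g j * A j d)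
      (fun j _ => mul_nonneg (hg0 j) (hA j d)) (Finset.mem_univ c)
  calc g ⬝ᵥ x + g c * A c d * y d ≤ g ⬝ᵥ x + (g ᵥ* A - g) d * x d :=
        (add_le_add_iff_left _).2
          (mul_le_mul hgd (le_pow_mulVec hA hy k d) (hy0 d) (sub_nonneg.2 (hg d)))
    _ ≤ g ⬝ᵥ x + (g ᵥ* A - g) ⬝ᵥ x :=
        (add_le_add_iff_left _).2 (Finset.single_le_sum (f := fun j => (g ᵥ* A - g) j * x j)
          (fun j _ => mul_nonneg (sub_nonneg.2 (hg j)) (hx0 j)) (Finset.mem_univ d))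
    _ = g ⬝ᵥ (A ^ (k + 1) *ᵥ y) := by
        rw [← add_dotProduct, add_sub_cancel, ← dotProduct_mulVec, pow_succ', ← mulVec_mulVec]

end Matrix

theorem Relation.ReflTransGen.exists_arc_leaving {α : Type*} {r : α → α → Prop} {S : Set α}
    {a b : α} (h : Relation.ReflTransGen r a b) (ha : a ∈ S) (hb : b ∉ S) :
    ∃ c ∈ S, ∃ d ∉ S, r c d ∧ Relation.ReflTransGen r d b := by
  induction h with
  | refl => exact absurd ha hb
  | @tail c d _ hcd ih =>
    by_cases hc : c ∈ S
    · exact ⟨c, hc, d, hb, hcd, .refl⟩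
    · obtain ⟨c', hc', d', hd', hcd', hd'b⟩ := ih hc
      exact ⟨c', hc', d', hd', hcd', hd'b.tail hcd⟩

section SpecRad

variable {κ : Type*} [Fintype κ]

theorem finite_setOf_eq_norm_mem_spectrum [DecidableEq κ] (Q : Matrix κ κ ℝ) :
    {r : ℝ | ∃ μ ∈ spectrum ℂ (Q.map (fun a => (a : ℂ))), r = ‖μ‖}.Finite :=
  ((finite_spectrum (Q.map fun a => (a : ℂ))).image fun z : ℂ => ‖z‖).subset
    fun _ ⟨μ, hμ, hr⟩ => ⟨μ, hμ, hr.symm⟩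

theorem norm_le_specRad [DecidableEq κ] {Q : Matrix κ κ ℝ} {μ : ℂ}
    (hμ : μ ∈ spectrum ℂ (Q.map (fun a => (a : ℂ)))) : ‖μ‖ ≤ SpecRad Q := by
  obtain rfl : ‹DecidableEq κ› = Classical.decEq κ := Subsingleton.elim _ _
  exact le_csSup (finite_setOf_eq_norm_mem_spectrum Q).bddAbove ⟨μ, hμ, rfl⟩

theorem specRad_le_of_forall_norm_le [DecidableEq κ] {Q : Matrix κ κ ℝ} {r : ℝ} (hr : 0 ≤ r)
    (h : ∀ μ ∈ spectrum ℂ (Q.map (fun a => (a : ℂ))), ‖μ‖ ≤ r) : SpecRad Q ≤ r := by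
  obtain rfl : ‹DecidableEq κ› = Classical.decEq κ := Subsingleton.elim _ _
  refine Real.sSup_le ?_ hr
  rintro _ ⟨μ, hμ, rfl⟩
  exact h μ hμ

theorem exists_mem_spectrum_one_le_norm [DecidableEq κ] {Q : Matrix κ κ ℝ}
    (h : 1 ≤ SpecRad Q) : ∃ μ ∈ spectrum ℂ (Q.map (fun a => (a : ℂ))), 1 ≤ ‖μ‖ := by
  obtain rfl : ‹DecidableEq κ› = Classical.decEq κ := Subsingleton.elim _ _
  set T := {r : ℝ | ∃ μ ∈ spectrum ℂ (Q.map (fun a => (a : ℂ))), r = ‖μ‖}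
  change 1 ≤ sSup T at h
  rcases T.eq_empty_or_nonempty with he | hne
  · rw [he, Real.sSup_empty] at h
    exact absurd h zero_lt_one.not_ge
  · obtain ⟨μ, hμ, hμr⟩ := hne.csSup_mem (finite_setOf_eq_norm_mem_spectrum Q)
    exact ⟨μ, hμ, hμr ▸ h⟩

theorem specRad_transpose (Q : Matrix κ κ ℝ) : SpecRad Qᵀ = SpecRad Q := by
  simp only [SpecRad, transpose_map, mem_spectrum_iff_isRoot_charpoly, charpoly_transpose]

theorem exists_nonneg_smul_le_mulVec_of_mem_spectrum [DecidableEq κ] {Q : Matrix κ κ ℝ}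
    (hQ : ∀ i j, 0 ≤ Q i j) {μ : ℂ} (hμ : μ ∈ spectrum ℂ (Q.map (fun a => (a : ℂ)))) :
    ∃ u : κ → ℝ, 0 ≤ u ∧ u ≠ 0 ∧ ‖μ‖ • u ≤ Q *ᵥ u := by
  rw [spectrum.mem_iff, isUnit_iff_isUnit_det, isUnit_iff_ne_zero, not_not,
    ← exists_mulVec_eq_zero_iff] at hμ
  obtain ⟨v, hv0, hv⟩ := hμ
  have hev : Q.map (fun a => (a : ℂ)) *ᵥ v = μ • v := by
    rw [sub_mulVec, Algebra.algebraMap_eq_smul_one, smul_mulVec, one_mulVec, sub_eq_zero] at hv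
    exact hv.symm
  refine ⟨fun i => ‖v i‖, fun i => norm_nonneg _, fun h => hv0 (funext fun i => ?_), fun i => ?_⟩
  · exact norm_eq_zero.1 (congrFun h i)
  calc ‖μ‖ * ‖v i‖ = ‖∑ j, (Q i j : ℂ) * v j‖ := by
        rw [← norm_mul, ← smul_eq_mul, ← Pi.smul_apply, ← hev]; rfl
    _ ≤ ∑ j, Q i j * ‖v j‖ := by
        refine (norm_sum_le _ _).trans (Finset.sum_le_sum fun j _ => ?_)
        rw [norm_mul, Complex.norm_real, Real.norm_of_nonneg (hQ i j)]

theorem one_le_specRad_of_le_mulVec [DecidableEq κ] {Q : Matrix κ κ ℝ}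
    (hQ : ∀ i j, 0 ≤ Q i j) {u : κ → ℝ} (hu0 : 0 ≤ u) (hu : u ≠ 0) (hsub : u ≤ Q *ᵥ u) :
    1 ≤ SpecRad Q := by
  let : NormedRing (Matrix κ κ ℂ) := Matrix.linftyOpNormedRing
  let : NormedAlgebra ℂ (Matrix κ κ ℂ) := Matrix.linftyOpNormedAlgebra
  have : CompleteSpace (Matrix κ κ ℂ) := FiniteDimensional.complete ℂ _
  obtain ⟨i₀, hi₀⟩ := Function.ne_iff.1 hu
  have : Nonempty κ := ⟨i₀⟩
  set A := Q.map (fun a => (a : ℂ))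
  set uc : κ → ℂ := fun i => u i
  have huc : 0 < ‖uc‖ := norm_pos_iff.2 fun h => hi₀ (by simpa [uc] using congrFun h i₀)
  -- no power of `Q` shrinks `u`, so every power of `A` has operator norm at least one
  have hpow : ∀ k, 1 ≤ ‖A ^ k‖ := by
    intro k
    have hA : A ^ k = (Q ^ k).map Complex.ofRealHom := (Matrix.map_pow Q Complex.ofRealHom k).symm
    have hle : ‖uc‖ ≤ ‖A ^ k *ᵥ uc‖ := by
      refine (pi_norm_le_iff_of_nonneg (norm_nonneg _)).2 fun i => ?_
      have hQu : u i ≤ (Q ^ k *ᵥ u) i := le_pow_mulVec hQ hsub k i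
      have hi : (A ^ k *ᵥ uc) i = ((Q ^ k *ᵥ u) i : ℂ) := by
        rw [hA]
        exact (RingHom.map_mulVec Complex.ofRealHom (Q ^ k) u i).symm
      calc ‖uc i‖ = u i := by rw [Complex.norm_real, Real.norm_of_nonneg (hu0 i)]
        _ ≤ ‖(A ^ k *ᵥ uc) i‖ := by
          rwa [hi, Complex.norm_real, Real.norm_of_nonneg ((hu0 i).trans hQu)]
        _ ≤ ‖A ^ k *ᵥ uc‖ := norm_le_pi_norm _ i
    have := hle.trans (linfty_opNorm_mulVec _ _)
    exact le_of_mul_le_mul_right (by simpa using this) huc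
  have hrad : 1 ≤ spectralRadius ℂ A := by
    refine ge_of_tendsto' (spectrum.pow_nnnorm_pow_one_div_tendsto_nhds_spectralRadius A)
      fun k => ?_
    have h1 : (1 : ℝ≥0∞) ≤ ‖A ^ k‖₊ := by exact_mod_cast hpow k
    simpa using ENNReal.rpow_le_rpow h1 (by positivity : (0 : ℝ) ≤ 1 / k)
  obtain ⟨μ, hμ, hμr⟩ := spectrum.exists_nnnorm_eq_spectralRadius A
  rw [← hμr] at hrad
  exact le_trans (by exact_mod_cast hrad) (norm_le_specRad hμ)

end SpecRad

section Stable

variable {ι : Type*} [Fintype ι] [DecidableEq ι] {P : Matrix ι ι ℝ}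

theorem MatStable.exists_bound (hstab : MatStable P) (x : ι → ℝ) :
    ∃ c, ∀ k i, (P ^ k *ᵥ x) i ≤ c := by
  obtain ⟨c, hc⟩ := hstab x
  exact ⟨c, fun k i => (le_abs_self _).trans ((norm_le_pi_norm (P ^ k *ᵥ x) i).trans (hc k))⟩

theorem MatStable.le_one_of_smul_le_mulVec (hstab : MatStable P) (hP : ∀ i j, 0 ≤ P i j)
    {w : ι → ℝ} {i : ι} (hi : 0 < w i) {r : ℝ} (hr : 0 ≤ r) (h : r • w ≤ P *ᵥ w) : r ≤ 1 := by
  obtain ⟨c, hc⟩ := hstab.exists_bound w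
  by_contra! hr1
  obtain ⟨k, hk⟩ := pow_unbounded_of_one_lt (c / w i) hr1
  rw [div_lt_iff₀ hi] at hk
  have := (pow_smul_le_pow_mulVec hP hr h k i).trans (hc k i)
  rw [Pi.smul_apply, smul_eq_mul] at this
  linarith

theorem MatStable.apply_eq_zero_of_arc_leaving_support (hstab : MatStable P)
    (hP : ∀ i j, 0 ≤ P i j) {g y : ι → ℝ} (hg0 : 0 ≤ g) (hg : g ≤ g ᵥ* P) (hy0 : 0 ≤ y)
    (hy : y ≤ P *ᵥ y) {c d : ι} (hc : 0 < g c) (hcd : 0 < P c d) (hd : g d = 0) : y d = 0 := by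
  by_contra hyd
  set ε := g c * P c d * y d
  have hε : 0 < ε := mul_pos (mul_pos hc hcd) ((hy0 d).lt_of_ne' hyd)
  have hgrow : ∀ k : ℕ, g ⬝ᵥ y + k * ε ≤ g ⬝ᵥ (P ^ k *ᵥ y) := by
    intro k
    induction k with
    | zero => simp
    | succ k ih =>
      push_cast
      linarith [dotProduct_pow_mulVec_add_le hP hg0 hg hy0 hy (c := c) hd k]
  obtain ⟨M, hM⟩ := hstab.exists_bound y
  have hbound : ∀ k, g ⬝ᵥ (P ^ k *ᵥ y) ≤ (∑ i, g i) * M := fun k => by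
    rw [Finset.sum_mul]
    exact Finset.sum_le_sum fun i _ => mul_le_mul_of_nonneg_left (hM k i) (hg0 i)
  obtain ⟨k, hk⟩ := exists_nat_gt (((∑ i, g i) * M - g ⬝ᵥ y) / ε)
  rw [div_lt_iff₀ hε] at hk
  linarith [hgrow k, hbound k]

end Stable

section Submatrix

variable {ι : Type*} [Fintype ι] {P : Matrix ι ι ℝ} (S : Set ι) [Fintype S]

theorem exists_nonneg_smul_le_mulVec_of_mem_spectrum_submatrix [DecidableEq S]
    (hP : ∀ i j, 0 ≤ P i j) {μ : ℂ}
    (hμ : μ ∈ spectrum ℂ ((P.submatrix Subtype.val Subtype.val : Matrix S S ℝ).map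
      (fun a => (a : ℂ)))) :
    ∃ w : ι → ℝ, 0 ≤ w ∧ ‖μ‖ • w ≤ P *ᵥ w ∧ Function.support w ⊆ S ∧ ∃ i, 0 < w i := by
  obtain ⟨u, hu0, hu, hμu⟩ := exists_nonneg_smul_le_mulVec_of_mem_spectrum
    (Q := P.submatrix Subtype.val Subtype.val) (fun s t => hP s.1 t.1) hμ
  set w : ι → ℝ := fun i => if h : i ∈ S then u ⟨i, h⟩ else 0
  have hwS : Function.support w ⊆ S := fun i hi => by_contra fun h => hi (dif_neg h)
  have hwu : (fun s : S => w s) = u := funext fun s => dif_pos s.2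
  have hw0 : 0 ≤ w := fun i => by
    by_cases h : i ∈ S
    · simpa [w, h] using hu0 ⟨i, h⟩
    · simp [w, h]
  obtain ⟨s, hs⟩ := Function.ne_iff.1 hu
  refine ⟨w, hw0, fun i => ?_, hwS, s, ?_⟩
  · by_cases h : i ∈ S
    · have := hμu ⟨i, h⟩
      rw [← hwu, submatrix_val_mulVec_comp_val P S hwS] at this
      simpa [w, h] using this
    · simpa [w, h] using mulVec_nonneg_of_nonneg hP hw0 i
  · simpa [w, s.2] using (hu0 s).lt_of_ne' hs

theorem specRad_submatrix_le_one [DecidableEq ι] (hP : ∀ i j, 0 ≤ P i j)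
    (hstab : MatStable P) : SpecRad (P.submatrix Subtype.val Subtype.val : Matrix S S ℝ) ≤ 1 := by
  classical
  refine specRad_le_of_forall_norm_le zero_le_one fun μ hμ => ?_
  obtain ⟨w, -, hw, -, i, hi⟩ := exists_nonneg_smul_le_mulVec_of_mem_spectrum_submatrix S hP hμ
  exact hstab.le_one_of_smul_le_mulVec hP hi (norm_nonneg μ) hw

theorem exists_le_mulVec_of_one_le_specRad_submatrix (hP : ∀ i j, 0 ≤ P i j)
    (h : 1 ≤ SpecRad (P.submatrix Subtype.val Subtype.val : Matrix S S ℝ)) :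
    ∃ w : ι → ℝ, 0 ≤ w ∧ w ≤ P *ᵥ w ∧ Function.support w ⊆ S ∧ ∃ i, 0 < w i := by
  classical
  obtain ⟨μ, hμ, h1⟩ := exists_mem_spectrum_one_le_norm h
  obtain ⟨w, hw0, hw, hwS, hpos⟩ :=
    exists_nonneg_smul_le_mulVec_of_mem_spectrum_submatrix S hP hμ
  exact ⟨w, hw0, fun i => (le_mul_of_one_le_left (hw0 i) h1).trans (hw i), hwS, hpos⟩

theorem one_le_specRad_submatrix_of_le_mulVec (hP : ∀ i j, 0 ≤ P i j) {w : ι → ℝ}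
    (hw0 : 0 ≤ w) (hw : w ≤ P *ᵥ w) (hwS : Function.support w ⊆ S) {i : ι} (hi : 0 < w i) :
    1 ≤ SpecRad (P.submatrix Subtype.val Subtype.val : Matrix S S ℝ) := by
  classical
  refine one_le_specRad_of_le_mulVec (fun s t => hP s t) (u := fun s : S => w s)
    (fun s => hw0 s) (Function.ne_iff.2 ⟨⟨i, hwS hi.ne'⟩, hi.ne'⟩) fun s => ?_
  rw [submatrix_val_mulVec_comp_val P S hwS]
  exact hw s

end Submatrix

section Nodes

variable {n : ℕ} {P : Matrix (Fin n) (Fin n) ℝ}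

theorem specRadOn_le_one (hP : ∀ i j, 0 ≤ P i j) (hstab : MatStable P) (S : Set (Fin n)) :
    SpecRadOn P S ≤ 1 :=
  letI := Fintype.ofFinite S
  specRad_submatrix_le_one S hP hstab

theorem specRadOn_transpose (S : Set (Fin n)) : SpecRadOn Pᵀ S = SpecRadOn P S :=
  letI := Fintype.ofFinite S
  specRad_transpose _

theorem exists_le_mulVec_of_one_le_specRadOn (hP : ∀ i j, 0 ≤ P i j) {S : Set (Fin n)}
    (h : 1 ≤ SpecRadOn P S) :
    ∃ w : Fin n → ℝ, 0 ≤ w ∧ w ≤ P *ᵥ w ∧ Function.support w ⊆ S ∧ ∃ i, 0 < w i :=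
  letI := Fintype.ofFinite S
  exists_le_mulVec_of_one_le_specRad_submatrix S hP h

theorem one_le_specRadOn_of_le_mulVec (hP : ∀ i j, 0 ≤ P i j) {S : Set (Fin n)}
    {w : Fin n → ℝ} (hw0 : 0 ≤ w) (hw : w ≤ P *ᵥ w) (hwS : Function.support w ⊆ S)
    {i : Fin n} (hi : 0 < w i) : 1 ≤ SpecRadOn P S :=
  letI := Fintype.ofFinite S
  one_le_specRad_submatrix_of_le_mulVec S hP hw0 hw hwS hi

theorem IsClass.accessM {C : Set (Fin n)} (hC : IsClass P C) {a b : Fin n} (ha : a ∈ C)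
    (hb : b ∈ C) : AccessM P a b := by
  obtain ⟨p, rfl⟩ := hC
  exact ha.2.trans hb.1

theorem exists_mem_criticalNodes_of_le_mulVec (hP : ∀ i j, 0 ≤ P i j) (hstab : MatStable P)
    {w : Fin n → ℝ} (hw0 : 0 ≤ w) (hw : w ≤ P *ᵥ w) {i₀ : Fin n} (hi₀ : 0 < w i₀) :
    ∃ i ∈ CriticalNodes P, 0 < w i := by
  let E : Fin n → Fin n → Prop := fun a b => 0 < P a b ∧ 0 < w b
  let R : Fin n → Finset (Fin n) := fun a => Finset.univ.filter (Relation.ReflTransGen E a)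
  -- every node that `p` reaches has a reachable set inside that of `p`, hence equal to it by
  -- minimality, so it reaches `p` back
  obtain ⟨p, hp, hmin⟩ := (Finset.univ.filter (0 < w ·)).exists_min_image (fun a => (R a).card)
    ⟨i₀, by simpa using hi₀⟩
  rw [Finset.mem_filter] at hp
  have hback : ∀ {b}, Relation.ReflTransGen E p b → Relation.ReflTransGen E b p := by
    intro b hpb
    have hb : 0 < w b := by
      rcases hpb.cases_tail with rfl | ⟨c, -, -, hb⟩
      exacts [hp.2, hb]
    have hRb : R b ⊆ R p := fun z hz => by
      simp only [R, Finset.mem_filter, Finset.mem_univ, true_and] at hz ⊢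
      exact hpb.trans hz
    have hpR : p ∈ R p := by simp [R, Relation.ReflTransGen.refl]
    rw [← Finset.eq_of_subset_of_card_le hRb (hmin b (by simpa using hb))] at hpR
    simpa [R] using hpR
  set Rp := {b | Relation.ReflTransGen E p b}
  let C := {j | AccessM P p j ∧ AccessM P j p}
  have hRC : Rp ⊆ C := fun b hb =>
    ⟨Relation.ReflTransGen.mono (fun _ _ h => h.1) _ _ hb,
      Relation.ReflTransGen.mono (fun _ _ h => h.1) _ _ (hback hb)⟩
  have hw' : Rp.indicator w ≤ P *ᵥ Rp.indicator w :=
    indicator_le_mulVec_indicator hP hw0 hw fun b hb j hbj hj => hb.tail ⟨hbj, hj⟩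
  have hwp : 0 < Rp.indicator w p := by
    rw [indicator_of_mem (show p ∈ Rp from .refl)]
    exact hp.2
  have hcrit : SpecRadOn P C = 1 :=
    le_antisymm (specRadOn_le_one hP hstab C) (one_le_specRadOn_of_le_mulVec hP
      (indicator_nonneg fun j _ => hw0 j) hw' (support_indicator_subset.trans hRC) hwp)
  exact ⟨p, ⟨C, ⟨⟨p, rfl⟩, hcrit⟩, .refl, .refl⟩, hp.2⟩

theorem specRadOn_lt_one_of_forall_notMem_criticalNodes (hP : ∀ i j, 0 ≤ P i j)
    (hstab : MatStable P) {S : Set (Fin n)} (hS : ∀ i ∈ S, i ∉ CriticalNodes P) :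
    SpecRadOn P S < 1 := by
  by_contra! h
  obtain ⟨w, hw0, hw, hwS, i₀, hi₀⟩ := exists_le_mulVec_of_one_le_specRadOn hP h
  obtain ⟨i, hi, hwi⟩ := exists_mem_criticalNodes_of_le_mulVec hP hstab hw0 hw hi₀
  exact hS i (hwS hwi.ne') hi

theorem mem_criticalNodes_of_accessM (hP : ∀ i j, 0 ≤ P i j) (hstab : MatStable P)
    {j i k : Fin n} (hj : j ∈ CriticalNodes P) (hk : k ∈ CriticalNodes P)
    (hji : AccessM P j i) (hik : AccessM P i k) : i ∈ CriticalNodes P := by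
  by_contra hi
  obtain ⟨C₁, hC₁, hjC₁⟩ := hj
  obtain ⟨C₂, hC₂, hkC₂⟩ := hk
  obtain ⟨g, hg0, hg, hgC, c₀, hc₀⟩ := exists_le_mulVec_of_one_le_specRadOn (P := Pᵀ)
    (fun a b => hP b a) ((specRadOn_transpose C₁).trans hC₁.2).ge
  rw [mulVec_transpose] at hg
  obtain ⟨v, hv0, hv, hvC, k₀, hk₀⟩ := exists_le_mulVec_of_one_le_specRadOn hP hC₂.2.ge
  have hgi : i ∉ Function.support g := fun h => hi ⟨C₁, hC₁, hgC h⟩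
  obtain ⟨c, hc, d, hd, hcd, hdi⟩ :=
    ((hC₁.1.accessM (hgC hc₀.ne') hjC₁).trans hji).exists_arc_leaving hc₀.ne' hgi
  obtain ⟨y, hy0, hy, hyd⟩ := exists_le_mulVec_pos_of_reflTransGen hP hv0 hv
    (hdi.trans (hik.trans (hC₂.1.accessM hkC₂ (hvC hk₀.ne')))) hk₀
  exact hyd.ne' (hstab.apply_eq_zero_of_arc_leaving_support hP hg0 hg hy0 hy
    ((hg0 c).lt_of_ne' hc) hcd (Function.notMem_support.1 hd))

end Nodes

/-- normal-form partition of a nonnegative stable matrix: the upstream,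
critical, downstream and independent node sets are pairwise disjoint and the spectral
radii of the principal submatrices on U, D and I are strictly less than one. -/
theorem stmt8 {n : ℕ} (P : Matrix (Fin n) (Fin n) ℝ)
    (hpos : ∀ i j, 0 ≤ P i j) (hstab : MatStable P) :
    let C : Set (Fin n) := CriticalNodes P
    let D : Set (Fin n) := {i | i ∉ C ∧ ∃ j ∈ C, AccessM P j i}
    let U : Set (Fin n) := {i | i ∉ C ∧ ∃ j ∈ C, AccessM P i j}
    let I : Set (Fin n) := {i | i ∉ C ∧ i ∉ D ∧ i ∉ U}
    (U ∩ C = ∅ ∧ U ∩ D = ∅ ∧ U ∩ I = ∅ ∧ C ∩ D = ∅ ∧ C ∩ I = ∅ ∧ D ∩ I = ∅) ∧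
    SpecRadOn P U < 1 ∧ SpecRadOn P D < 1 ∧ SpecRadOn P I < 1 := by
  intro C D U I
  have hlt : ∀ S : Set (Fin n), (∀ i ∈ S, i ∉ C) → SpecRadOn P S < 1 := fun _ =>
    specRadOn_lt_one_of_forall_notMem_criticalNodes hpos hstab
  have hUD : U ∩ D = ∅ := Set.eq_empty_of_forall_notMem
    fun i ⟨⟨hiC, j, hj, hij⟩, _, k, hk, hki⟩ =>
      hiC (mem_criticalNodes_of_accessM hpos hstab hk hj hki hij)
  refine ⟨⟨?_, hUD, ?_, ?_, ?_, ?_⟩, hlt U fun i hi => hi.1, hlt D fun i hi => hi.1,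
    hlt I fun i hi => hi.1⟩ <;> refine Set.eq_empty_of_forall_notMem fun i hi => ?_
  exacts [hi.1.1 hi.2, hi.2.2.2 hi.1, hi.2.1 hi.1, hi.2.1 hi.1, hi.2.2.1 hi.1]
end
end

section
/- Let f : D → D be a convex monotone map (D ⊆ ℝ^n open convex). If v and w are both tangentially stable fixed points of f, then the critical graphs of ∂f(v) and ∂f(w) coincide: G^c(∂f(v)) = G^c(∂f(w)). -/
/-!
Every subgradient `P ∈ ∂f(v)` is nonnegative, by monotonicity, and power bounded, since
`P ^ m x ≤ (f'_v)^[m] x` and `f'_v` has orbits bounded above. For `z = w - v` the fixed point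
equations give `P z ≤ z`, and equality holds on the critical nodes of `P`: otherwise the defect
`z - P z` telescopes along the orbit `P ^ m z`, which is bounded below, and a column of the powers
of the irreducible critical block would be summable, forcing its spectral radius below `1`.
So the critical rows of `P` are also subgradient rows at `w`. Completing them with the rows of a
linear minorant of the sublinear map `f'_w` (Hahn–Banach) gives `Q ∈ ∂f(w)`, again power bounded,
in which every critical class of `P` lies inside a class of spectral radius `1`. Hence every
critical edge of `∂f(v)` is one of `∂f(w)`, and the converse holds by symmetry.
-/

noncomputable section
open Filter Topology Set
open scoped Classical

open scoped Matrix

namespace Matrix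

theorem mulVec_le_mulVec {ι κ : Type*} [Fintype κ] {A : Matrix ι κ ℝ}
    (hA : ∀ i j, 0 ≤ A i j) {x y : κ → ℝ} (h : x ≤ y) : A *ᵥ x ≤ A *ᵥ y := fun i =>
  Finset.sum_le_sum fun j _ => mul_le_mul_of_nonneg_left (h j) (hA i j)

variable {ι : Type*} [Fintype ι] [DecidableEq ι] {A : Matrix ι ι ℝ}

theorem pow_apply_mul_pow_apply_le (hA : ∀ i j, 0 ≤ A i j) (a b : ℕ) (i k j : ι) :
    (A ^ a) i k * (A ^ b) k j ≤ (A ^ (a + b)) i j := by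
  rw [pow_add, mul_apply]
  exact Finset.single_le_sum (f := fun l => (A ^ a) i l * (A ^ b) l j)
    (fun l _ => mul_nonneg (pow_apply_nonneg hA a i l) (pow_apply_nonneg hA b l j))
    (Finset.mem_univ k)

theorem tendsto_pow_apply_of_tendsto_pow_apply_col (hA : ∀ i j, 0 ≤ A i j) {k : ι}
    (hreach : ∀ j, ∃ m, 0 < (A ^ m) j k) (hk : ∀ i, Tendsto (fun m => (A ^ m) i k) atTop (𝓝 0))
    (i j : ι) : Tendsto (fun m => (A ^ m) i j) atTop (𝓝 0) := by
  obtain ⟨m₀, hm₀⟩ := hreach j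
  refine squeeze_zero (fun m => pow_apply_nonneg hA m i j) (fun m => ?_)
    (by simpa using ((hk i).comp (tendsto_add_atTop_nat m₀)).div_const ((A ^ m₀) j k))
  rw [le_div_iff₀ hm₀]
  exact pow_apply_mul_pow_apply_le hA m m₀ i j k

theorem pow_apply_le_of_le_submatrix {κ : Type*} [Fintype κ] [DecidableEq κ] {B : Matrix κ κ ℝ}
    (hA : ∀ i j, 0 ≤ A i j) (hB : ∀ i j, 0 ≤ B i j) {e : ι → κ} (he : Function.Injective e)
    (hAB : ∀ i j, A i j ≤ B (e i) (e j)) (m : ℕ) (i j : ι) :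
    (A ^ m) i j ≤ (B ^ m) (e i) (e j) := by
  induction m generalizing j with
  | zero => simp [one_apply, he.eq_iff]
  | succ m ih =>
    rw [pow_succ, pow_succ, mul_apply, mul_apply]
    calc ∑ l, (A ^ m) i l * A l j ≤ ∑ l, (B ^ m) (e i) (e l) * B (e l) (e j) :=
          Finset.sum_le_sum fun l _ => mul_le_mul (ih l) (hAB l j) (hA l j)
            (pow_apply_nonneg hB m _ _)
      _ = ∑ l ∈ Finset.univ.image e, (B ^ m) (e i) l * B l (e j) :=
          (Finset.sum_image (f := fun l => (B ^ m) (e i) l * B l (e j))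
            fun _ _ _ _ h => he h).symm
      _ ≤ ∑ l, (B ^ m) (e i) l * B l (e j) :=
          Finset.sum_le_sum_of_subset_of_nonneg (Finset.subset_univ _) fun l _ _ =>
            mul_nonneg (pow_apply_nonneg hB m _ _) (hB _ _)

/-- The defect `z - A z` telescopes along the orbit of `z`. -/
theorem summable_pow_apply_of_mulVec_lt (hA : ∀ i j, 0 ≤ A i j) {z u : ι → ℝ}
    (hz : A *ᵥ z ≤ z) (hu : ∀ m, u ≤ A ^ m *ᵥ z) {k : ι} (hk : (A *ᵥ z) k < z k) (i : ι) :
    Summable fun m => (A ^ m) i k := by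
  set d := z - A *ᵥ z
  have hd : 0 ≤ d := sub_nonneg.2 hz
  have hdk : 0 < d k := sub_pos.2 hk
  have htel (M : ℕ) : ∑ m ∈ Finset.range M, (A ^ m *ᵥ d) = z - A ^ M *ᵥ z := by
    have hstep (m : ℕ) : A ^ m *ᵥ d = A ^ m *ᵥ z - A ^ (m + 1) *ᵥ z := by
      rw [mulVec_sub, mulVec_mulVec, ← pow_succ]
    simp only [hstep, Finset.sum_range_sub', pow_zero, one_mulVec]
  refine summable_of_sum_range_le (c := (z i - u i) / d k)
    (fun m => pow_apply_nonneg hA m i k) fun M => ?_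
  rw [le_div_iff₀ hdk, Finset.sum_mul]
  calc ∑ m ∈ Finset.range M, (A ^ m) i k * d k
      ≤ ∑ m ∈ Finset.range M, (A ^ m *ᵥ d) i :=
        Finset.sum_le_sum fun m _ => Finset.single_le_sum (f := fun l => (A ^ m) i l * d l)
          (fun l _ => mul_nonneg (pow_apply_nonneg hA m i l) (hd l)) (Finset.mem_univ k)
    _ = z i - (A ^ M *ᵥ z) i := by rw [← Finset.sum_apply, htel]; rfl
    _ ≤ z i - u i := by linarith [hu M i]

end Matrix

section SpectralRadius

open scoped Matrix.Norms.Operator NNReal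

theorem Matrix.linfty_opNorm_le_card_mul {ι κ α : Type*} [Fintype ι] [Fintype κ]
    [SeminormedAddCommGroup α] {X : Matrix ι κ α} {c : ℝ} (hc : 0 ≤ c)
    (h : ∀ i j, ‖X i j‖ ≤ c) : ‖X‖ ≤ Fintype.card κ * c := by
  rw [Matrix.linfty_opNorm_def]
  lift c to ℝ≥0 using hc
  norm_cast
  refine Finset.sup_le fun i _ => ?_
  calc ∑ j, ‖X i j‖₊ ≤ ∑ _j : κ, c := Finset.sum_le_sum fun j _ => h i j
    _ = Fintype.card κ * c := by simp

section BanachAlgebra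

variable {A : Type*} [NormedRing A] [NormedAlgebra ℂ A] [CompleteSpace A]

theorem spectrum.norm_pow_le_of_mem {a : A} {μ : ℂ} (hμ : μ ∈ spectrum ℂ a) (m : ℕ) :
    ‖μ‖ ^ m ≤ ‖a ^ m‖ * ‖(1 : A)‖ := by
  simpa [norm_pow] using spectrum.norm_le_norm_mul_of_mem (spectrum.pow_mem_pow a m hμ)

theorem spectrum.tendsto_pow_nhds_zero_of_spectralRadius_lt_one {a : A}
    (ha : spectralRadius ℂ a < 1) : Tendsto (fun m => a ^ m) atTop (𝓝 0) := by
  obtain ⟨r, hρr, hr1⟩ := ENNReal.lt_iff_exists_nnreal_btwn.mp ha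
  have hr1 : (r : ℝ) < 1 := by exact_mod_cast hr1
  have hlt : ∀ᶠ m : ℕ in atTop, ‖a ^ m‖ < (r : ℝ) ^ m := by
    filter_upwards [(pow_norm_pow_one_div_tendsto_nhds_spectralRadius a).eventually_lt_const
      (ENNReal.ofReal_coe_nnreal ▸ hρr), eventually_gt_atTop 0] with m hm hm0
    have hm : ‖a ^ m‖ ^ (1 / m : ℝ) < r :=
      (ENNReal.ofReal_lt_ofReal_iff_of_nonneg (by positivity)).mp hm
    rwa [one_div, Real.rpow_inv_lt_iff_of_pos (norm_nonneg _) r.coe_nonneg (by positivity),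
      Real.rpow_natCast] at hm
  refine squeeze_zero_norm' (hlt.mono fun m hm => hm.le) ?_
  exact tendsto_pow_atTop_nhds_zero_of_lt_one r.coe_nonneg hr1

end BanachAlgebra

namespace Matrix

variable {ι : Type*} [Fintype ι] [DecidableEq ι]

theorem specRad_eq_sSup_image (A : Matrix ι ι ℝ) :
    SpecRad A = sSup (norm '' spectrum ℂ (A.map fun a => (a : ℂ))) := by
  rw [SpecRad, Subsingleton.elim (Classical.decEq ι) ‹_›]
  congr 1
  ext r
  simp [eq_comm]

theorem specRad_lt_one_iff (A : Matrix ι ι ℝ) :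
    SpecRad A < 1 ↔ ∀ μ ∈ spectrum ℂ (A.map fun a => (a : ℂ)), ‖μ‖ < 1 := by
  have hfin := (Matrix.finite_spectrum (A.map fun a => (a : ℂ))).image norm
  rw [specRad_eq_sSup_image]
  rcases (norm '' spectrum ℂ (A.map fun a => (a : ℂ))).eq_empty_or_nonempty with h | h
  · simp_all
  · simp [hfin.csSup_lt_iff h]

theorem specRad_le_one_of_norm_le_one {A : Matrix ι ι ℝ}
    (h : ∀ μ ∈ spectrum ℂ (A.map fun a => (a : ℂ)), ‖μ‖ ≤ 1) : SpecRad A ≤ 1 := by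
  rw [specRad_eq_sSup_image]
  exact Real.sSup_le (by simpa using h) zero_le_one

theorem map_ofReal_pow_apply (A : Matrix ι ι ℝ) (m : ℕ) (i j : ι) :
    ((A.map fun a => (a : ℂ)) ^ m) i j = ((A ^ m) i j : ℂ) :=
  congrFun₂ (Matrix.map_pow A Complex.ofRealHom m).symm i j

theorem specRad_lt_one_of_tendsto_pow_apply {A : Matrix ι ι ℝ}
    (h : ∀ i j, Tendsto (fun m => (A ^ m) i j) atTop (𝓝 0)) : SpecRad A < 1 := by
  rw [specRad_lt_one_iff]
  intro μ hμ
  have hpow : Tendsto (fun m => (A.map fun a => (a : ℂ)) ^ m) atTop (𝓝 0) := by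
    refine tendsto_pi_nhds.2 fun i => tendsto_pi_nhds.2 fun j => ?_
    simpa [map_ofReal_pow_apply] using (h i j).ofReal
  have hμpow : Tendsto (fun m => ‖μ‖ ^ m) atTop (𝓝 0) := by
    refine squeeze_zero (fun m => by positivity) (spectrum.norm_pow_le_of_mem hμ) ?_
    simpa using (tendsto_norm_zero.comp hpow).mul_const ‖(1 : Matrix ι ι ℂ)‖
  simpa using tendsto_pow_atTop_nhds_zero_iff.mp hμpow

theorem tendsto_pow_apply_of_specRad_lt_one {A : Matrix ι ι ℝ} (h : SpecRad A < 1) (i j : ι) :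
    Tendsto (fun m => (A ^ m) i j) atTop (𝓝 0) := by
  have : Nonempty ι := ⟨i⟩
  have hρ : spectralRadius ℂ (A.map fun a => (a : ℂ)) < 1 := by
    simpa using spectrum.spectralRadius_lt_of_forall_lt _ (r := 1)
      fun μ hμ => by exact_mod_cast (specRad_lt_one_iff A).1 h μ hμ
  have hpow := spectrum.tendsto_pow_nhds_zero_of_spectralRadius_lt_one hρ
  have hij : Tendsto (fun m => ((A ^ m) i j : ℂ)) atTop (𝓝 0) := by
    simpa [map_ofReal_pow_apply] using tendsto_pi_nhds.1 (tendsto_pi_nhds.1 hpow i) j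
  simpa [Function.comp_def] using (Complex.continuous_re.tendsto 0).comp hij

theorem specRad_le_one_of_abs_pow_apply_le {A : Matrix ι ι ℝ} {c : ℝ}
    (h : ∀ m i j, |(A ^ m) i j| ≤ c) : SpecRad A ≤ 1 := by
  refine specRad_le_one_of_norm_le_one fun μ hμ => ?_
  by_contra! h1
  obtain ⟨m, hm⟩ := pow_unbounded_of_one_lt
    (Fintype.card ι * |c| * ‖(1 : Matrix ι ι ℂ)‖) h1
  have hnorm : ‖(A.map fun a => (a : ℂ)) ^ m‖ ≤ Fintype.card ι * |c| :=
    linfty_opNorm_le_card_mul (abs_nonneg c) fun i j => by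
      simpa [map_ofReal_pow_apply] using (h m i j).trans (le_abs_self c)
  have := (spectrum.norm_pow_le_of_mem hμ m).trans
    (mul_le_mul_of_nonneg_right hnorm (norm_nonneg _))
  linarith

end Matrix

end SpectralRadius

section CriticalNodes

open Matrix

variable {n : ℕ} {P Q : Matrix (Fin n) (Fin n) ℝ} {C : Set (Fin n)}

theorem specRadOn_eq_specRad_submatrix [Fintype C] :
    SpecRadOn P C = SpecRad (P.submatrix ((↑) : C → Fin n) (↑)) := by
  rw [SpecRadOn, Subsingleton.elim (Fintype.ofFinite C) ‹_›]
  rfl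

theorem IsClass.reflTransGen (hC : IsClass P C) (p q : C) :
    Relation.ReflTransGen (fun a b : C => 0 < P a b) p q := by
  obtain ⟨i₀, rfl⟩ := hC
  obtain ⟨p, hp₀, hp₁⟩ := p
  obtain ⟨q, hq₀, hq₁⟩ := q
  induction (hp₁.trans hq₀ : AccessM P p q) using Relation.ReflTransGen.head_induction_on with
  | refl => rfl
  | head hab _ ih =>
    exact .head hab (ih (hp₀.tail hab) (.trans ‹_› hq₁))

theorem IsClass.exists_pow_submatrix_pos (hC : IsClass P C) (hP : ∀ i j, 0 ≤ P i j) (p q : C) :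
    ∃ m, 0 < ((P.submatrix ((↑) : C → Fin n) (↑)) ^ m) p q := by
  induction hC.reflTransGen p q using Relation.ReflTransGen.head_induction_on with
  | refl => exact ⟨0, by simp⟩
  | @head a b hab _ ih =>
    obtain ⟨m, hm⟩ := ih
    refine ⟨1 + m, lt_of_lt_of_le ?_ (pow_apply_mul_pow_apply_le
      (A := P.submatrix ((↑) : C → Fin n) (↑)) (fun _ _ => hP _ _) 1 m a b q)⟩
    simpa using mul_pos hab hm

theorem IsClass.accessM_of_rows_eq (hC : IsClass P C) (hrow : ∀ k ∈ C, ∀ l, Q k l = P k l)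
    {p q : Fin n} (hp : p ∈ C) (hq : q ∈ C) : AccessM Q p q :=
  (hC.reflTransGen ⟨p, hp⟩ ⟨q, hq⟩).lift Subtype.val fun a b hab => by
    simpa [Function.onFun, hrow a a.2 b] using hab

/-- The restriction of `P` to a critical class has spectral radius `1`, so its powers cannot have
a summable column. -/
theorem mulVec_apply_eq_of_mem_criticalNodes (hP : ∀ i j, 0 ≤ P i j) {z u : Fin n → ℝ}
    (hz : P *ᵥ z ≤ z) (hu : ∀ m, u ≤ P ^ m *ᵥ z) {k : Fin n} (hk : k ∈ CriticalNodes P) :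
    (P *ᵥ z) k = z k := by
  obtain ⟨C, ⟨hC, hρ⟩, hkC⟩ := hk
  by_contra hne
  have hsum := summable_pow_apply_of_mulVec_lt hP hz hu (lt_of_le_of_ne (hz k) hne)
  set A : Matrix C C ℝ := P.submatrix (↑) (↑)
  have hA : ∀ i j, 0 ≤ A i j := fun i j => hP _ _
  have hcol (i : C) : Tendsto (fun m => (A ^ m) i ⟨k, hkC⟩) atTop (𝓝 0) :=
    squeeze_zero (fun m => pow_apply_nonneg hA m _ _)
      (pow_apply_le_of_le_submatrix hA hP Subtype.val_injective (fun _ _ => le_rfl) · i _)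
      (hsum i).tendsto_atTop_zero
  have hlt := specRad_lt_one_of_tendsto_pow_apply <| tendsto_pow_apply_of_tendsto_pow_apply_col hA
    (fun j => hC.exists_pow_submatrix_pos hP j _) hcol
  rw [← specRadOn_eq_specRad_submatrix, hρ] at hlt
  exact lt_irrefl _ hlt

theorem criticalNodes_subset_of_rows_eq (hP : ∀ i j, 0 ≤ P i j) (hQ : ∀ i j, 0 ≤ Q i j)
    (hrow : ∀ k ∈ CriticalNodes P, ∀ l, Q k l = P k l) {c : ℝ} (hc : ∀ m i j, (Q ^ m) i j ≤ c) :
    CriticalNodes P ⊆ CriticalNodes Q := by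
  rintro k ⟨C, ⟨hC, hρ⟩, hkC⟩
  have hrowC : ∀ l ∈ C, ∀ l', Q l l' = P l l' := fun l hl => hrow l ⟨C, ⟨hC, hρ⟩, hl⟩
  set C' := {l | AccessM Q k l ∧ AccessM Q l k}
  have hCC' : C ⊆ C' := fun l hl =>
    ⟨hC.accessM_of_rows_eq hrowC hkC hl, hC.accessM_of_rows_eq hrowC hl hkC⟩
  refine ⟨C', ⟨⟨k, rfl⟩, ?_⟩, .refl, .refl⟩
  set B : Matrix C' C' ℝ := Q.submatrix (↑) (↑)
  have hB : ∀ i j, 0 ≤ B i j := fun i j => hQ _ _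
  rw [specRadOn_eq_specRad_submatrix]
  refine le_antisymm (specRad_le_one_of_abs_pow_apply_le (c := c) fun m i j => ?_)
    (not_lt.1 fun hlt => ?_)
  · rw [abs_of_nonneg (pow_apply_nonneg hB m i j)]
    exact (pow_apply_le_of_le_submatrix hB hQ Subtype.val_injective (fun _ _ => le_rfl) m i j).trans
      (hc m i j)
  · set A : Matrix C C ℝ := P.submatrix (↑) (↑)
    have hA : ∀ i j, 0 ≤ A i j := fun i j => hP _ _
    have hAB (i j : C) : A i j ≤ B (Set.inclusion hCC' i) (Set.inclusion hCC' j) :=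
      (hrowC i i.2 j).ge
    have hlt' := specRad_lt_one_of_tendsto_pow_apply fun i j =>
      squeeze_zero (fun m => pow_apply_nonneg hA m i j)
        (pow_apply_le_of_le_submatrix hA hB (Set.inclusion_injective hCC') hAB · i j)
        (tendsto_pow_apply_of_specRad_lt_one hlt _ _)
    rw [← specRadOn_eq_specRad_submatrix, hρ] at hlt'
    exact lt_irrefl _ hlt'

end CriticalNodes

section DirectionalDerivative

variable {E ι : Type*} [AddCommGroup E] [Module ℝ E] {D : Set E} {f : E → ι → ℝ} {a : E}
  {g : E → ι → ℝ}

def HasDirDeriv (f : E → ι → ℝ) (a : E) (g : E → ι → ℝ) : Prop :=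
  ∀ y, Tendsto (fun ε : ℝ => ε⁻¹ • (f (a + ε • y) - f a)) (𝓝[>] 0) (𝓝 (g y))

theorem eventually_add_smul_mem_nhdsGT [TopologicalSpace E] [ContinuousAdd E]
    [ContinuousSMul ℝ E] (hD : IsOpen D) (ha : a ∈ D) (y : E) :
    ∀ᶠ ε : ℝ in 𝓝[>] 0, a + ε • y ∈ D := by
  have hcont : Tendsto (fun ε : ℝ => a + ε • y) (𝓝 0) (𝓝 a) := by
    simpa using ((continuous_id.smul continuous_const).const_add a).tendsto (0 : ℝ)
  exact (hcont.mono_left nhdsWithin_le_nhds).eventually_mem (hD.mem_nhds ha)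

namespace HasDirDeriv

theorem smul (hg : HasDirDeriv f a g) {c : ℝ} (hc : 0 < c) (y : E) :
    g (c • y) = c • g y := by
  have hmul : Tendsto (c * ·) (𝓝[>] (0 : ℝ)) (𝓝[>] 0) := by
    simpa using Filter.TendstoNhdsWithinIoi.const_mul hc (tendsto_id (x := 𝓝[>] (0 : ℝ)))
  refine tendsto_nhds_unique (hg (c • y)) ((((hg y).comp hmul).const_smul c).congr' ?_)
  filter_upwards [self_mem_nhdsWithin] with ε (hε : 0 < ε)
  simp only [Function.comp_apply, smul_smul, mul_comm c ε]
  congr 1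
  field_simp

theorem sub_le (hg : HasDirDeriv f a g) (hconv : ∀ i, ConvexOn ℝ D fun x => f x i)
    (ha : a ∈ D) {x : E} (hx : x ∈ D) : g (x - a) ≤ f x - f a := by
  refine le_of_tendsto (hg (x - a)) ?_
  filter_upwards [Ioc_mem_nhdsGT zero_lt_one] with ε ⟨hε0, hε1⟩ i
  have hseg : a + ε • (x - a) = (1 - ε) • a + ε • x := by module
  have hcvx := (hconv i).2 ha hx (sub_nonneg.2 hε1) hε0.le (sub_add_cancel 1 ε)
  simp only [smul_eq_mul, ← hseg] at hcvx
  simp only [Pi.smul_apply, Pi.sub_apply, smul_eq_mul]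
  rw [inv_mul_le_iff₀ hε0]
  linarith

variable [TopologicalSpace E] [ContinuousAdd E] [ContinuousSMul ℝ E]

theorem add_le (hg : HasDirDeriv f a g) (hconv : ∀ i, ConvexOn ℝ D fun x => f x i)
    (hD : IsOpen D) (ha : a ∈ D) (y y' : E) : g (y + y') ≤ g y + g y' := by
  have h2 : Tendsto ((2 : ℝ) * ·) (𝓝[>] 0) (𝓝[>] 0) := by
    simpa using Filter.TendstoNhdsWithinIoi.const_mul two_pos (tendsto_id (x := 𝓝[>] (0 : ℝ)))
  refine le_of_tendsto_of_tendsto (hg (y + y')) (((hg y).comp h2).add ((hg y').comp h2)) ?_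
  filter_upwards [h2.eventually (eventually_add_smul_mem_nhdsGT hD ha y),
    h2.eventually (eventually_add_smul_mem_nhdsGT hD ha y'), self_mem_nhdsWithin]
    with ε hy hy' (hε : 0 < ε) i
  have hmid : a + ε • (y + y') =
      (1 / 2 : ℝ) • (a + (2 * ε) • y) + (1 / 2 : ℝ) • (a + (2 * ε) • y') := by
    module
  have hcvx := (hconv i).2 hy hy' (by norm_num : (0 : ℝ) ≤ 1 / 2) (by norm_num : (0 : ℝ) ≤ 1 / 2)
    (by norm_num)
  simp only [smul_eq_mul, ← hmid] at hcvx
  simp only [Function.comp_apply, Pi.add_apply, Pi.smul_apply, Pi.sub_apply, smul_eq_mul]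
  rw [mul_inv_rev, mul_assoc, mul_assoc, ← mul_add]
  exact mul_le_mul_of_nonneg_left (by linarith) (inv_nonneg.2 hε.le)

end HasDirDeriv

end DirectionalDerivative

theorem Matrix.exists_mulVec_le_of_sublinear {ι κ : Type*} [Fintype ι] [DecidableEq ι]
    {g : (ι → ℝ) → κ → ℝ} (hsmul : ∀ c : ℝ, 0 < c → ∀ y, g (c • y) = c • g y)
    (hadd : ∀ y y', g (y + y') ≤ g y + g y') : ∃ Q : Matrix κ ι ℝ, ∀ y, Q *ᵥ y ≤ g y := by
  have hrow (k : κ) : ∃ G : (ι → ℝ) →ₗ[ℝ] ℝ, ∀ y, G y ≤ g y k := by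
    have hzero : g 0 k = 0 := by
      have h := congrFun (hsmul 2 two_pos 0) k
      simp only [smul_zero, Pi.smul_apply, smul_eq_mul] at h
      linarith
    obtain ⟨G, -, hG⟩ := exists_extension_of_le_sublinear ⟨⊥, 0⟩ (fun y => g y k)
      (fun c hc y => by simp [hsmul c hc y]) (fun y y' => hadd y y' k) fun ⟨x, hx⟩ => by
        rw [Submodule.mem_bot] at hx
        subst hx
        simp [hzero]
    exact ⟨G, hG⟩
  choose G hG using hrow
  exact ⟨LinearMap.toMatrix' (LinearMap.pi G), fun y k => by simpa using hG k y⟩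

section Subdifferential

variable {n : ℕ} {D : Set (Fin n → ℝ)} {f : (Fin n → ℝ) → Fin n → ℝ} {a : Fin n → ℝ}
  {g : (Fin n → ℝ) → Fin n → ℝ}

open Matrix

theorem HasDirDeriv.nonpos (hg : HasDirDeriv f a g) (hD : IsOpen D) (ha : a ∈ D)
    (hmono : ∀ x ∈ D, ∀ y ∈ D, x ≤ y → f x ≤ f y) {y : Fin n → ℝ} (hy : y ≤ 0) : g y ≤ 0 := by
  refine le_of_tendsto (hg y) ?_
  filter_upwards [eventually_add_smul_mem_nhdsGT hD ha y, self_mem_nhdsWithin]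
    with ε hεy (hε : 0 < ε)
  have hle : f (a + ε • y) ≤ f a :=
    hmono _ hεy _ ha (add_le_of_nonpos_right (smul_nonpos_of_nonneg_of_nonpos hε.le hy))
  exact smul_nonpos_of_nonneg_of_nonpos (inv_nonneg.2 hε.le) (sub_nonpos.2 hle)

theorem HasDirDeriv.mulVec_le (hg : HasDirDeriv f a g) (hD : IsOpen D) (ha : a ∈ D)
    {P : Matrix (Fin n) (Fin n) ℝ} (hP : P ∈ Subdiff f D a) (y : Fin n → ℝ) : P *ᵥ y ≤ g y := by
  refine ge_of_tendsto (hg y) ?_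
  filter_upwards [eventually_add_smul_mem_nhdsGT hD ha y, self_mem_nhdsWithin]
    with ε hεy (hε : 0 < ε)
  have h := hP _ hεy
  rw [add_sub_cancel_left, mulVec_smul] at h
  calc P *ᵥ y = ε⁻¹ • ε • P *ᵥ y := (inv_smul_smul₀ hε.ne' _).symm
    _ ≤ ε⁻¹ • (f (a + ε • y) - f a) := smul_le_smul_of_nonneg_left h (inv_nonneg.2 hε.le)

theorem HasDirDeriv.pow_mulVec_le_iterate (hg : HasDirDeriv f a g) (hD : IsOpen D) (ha : a ∈ D)
    {P : Matrix (Fin n) (Fin n) ℝ} (hP : P ∈ Subdiff f D a) (hP0 : ∀ i j, 0 ≤ P i j)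
    (x : Fin n → ℝ) (m : ℕ) : P ^ m *ᵥ x ≤ g^[m] x := by
  induction m with
  | zero => simp
  | succ m ih =>
    rw [pow_succ', ← mulVec_mulVec, Function.iterate_succ_apply']
    exact (mulVec_le_mulVec hP0 ih).trans (hg.mulVec_le hD ha hP _)

theorem nonneg_of_mem_subdiff_s13 (hg : HasDirDeriv f a g) (hD : IsOpen D) (ha : a ∈ D)
    (hmono : ∀ x ∈ D, ∀ y ∈ D, x ≤ y → f x ≤ f y) {P : Matrix (Fin n) (Fin n) ℝ}
    (hP : P ∈ Subdiff f D a) (k l : Fin n) : 0 ≤ P k l := by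
  have h := (hg.mulVec_le hD ha hP (-Pi.single l 1)).trans
    (hg.nonpos hD ha hmono (neg_nonpos.2 (Pi.single_nonneg.2 zero_le_one))) k
  simpa [mulVec_neg, mulVec_single] using h

end Subdifferential

open Matrix in
theorem exists_mem_subdiff_rows_eq {n : ℕ} {D : Set (Fin n → ℝ)} (hD : IsOpen D)
    {f : (Fin n → ℝ) → Fin n → ℝ} (hconv : ∀ i, ConvexOn ℝ D fun x => f x i)
    (hmono : ∀ x ∈ D, ∀ y ∈ D, x ≤ y → f x ≤ f y) {v w : Fin n → ℝ} (hv : v ∈ D) (hw : w ∈ D)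
    (hfv : f v = v) (hfw : f w = w) {gv gw : (Fin n → ℝ) → Fin n → ℝ}
    (hgv : HasDirDeriv f v gv) (hgw : HasDirDeriv f w gw)
    (hbv : ∀ x, ∃ u, ∀ k : ℕ, gv^[k] x ≤ u) (hbw : ∀ x, ∃ u, ∀ k : ℕ, gw^[k] x ≤ u)
    {P : Matrix (Fin n) (Fin n) ℝ} (hP : P ∈ Subdiff f D v) :
    ∃ Q ∈ Subdiff f D w, CriticalNodes P ⊆ CriticalNodes Q ∧
      ∀ k ∈ CriticalNodes P, ∀ l, Q k l = P k l := by
  have hP0 := nonneg_of_mem_subdiff_s13 hgv hD hv hmono hP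
  have hz : P *ᵥ (w - v) ≤ w - v := by simpa [hfv, hfw] using hP w hw
  obtain ⟨u, hu⟩ := hbv (v - w)
  have hlow (m : ℕ) : -u ≤ P ^ m *ᵥ (w - v) := by
    have h := (hgv.pow_mulVec_le_iterate hD hv hP hP0 (v - w) m).trans (hu m)
    rwa [← neg_sub, mulVec_neg, neg_le] at h
  have htight (k) (hk : k ∈ CriticalNodes P) : (P *ᵥ (w - v)) k = (w - v) k :=
    mulVec_apply_eq_of_mem_criticalNodes hP0 hz hlow hk
  obtain ⟨R, hR⟩ := exists_mulVec_le_of_sublinear (fun c hc => hgw.smul hc)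
    (hgw.add_le hconv hD hw)
  set Q : Matrix (Fin n) (Fin n) ℝ := of fun k => if k ∈ CriticalNodes P then P k else R k
  have hrow : ∀ k ∈ CriticalNodes P, ∀ l, Q k l = P k l := fun k hk l => by simp [Q, hk]
  have hQ : Q ∈ Subdiff f D w := by
    intro x hx k
    by_cases hk : k ∈ CriticalNodes P
    · have h := hP x hx k
      have hsplit : x - v = (x - w) + (w - v) := by abel
      simp only [hsplit, mulVec_add, Pi.add_apply, htight k hk, Pi.sub_apply, hfv, hfw] at h ⊢
      simp only [Q, mulVec, dotProduct, of_apply, if_pos hk] at h ⊢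
      linarith
    · simpa [Q, hk, mulVec, dotProduct] using (hR (x - w) k).trans (hgw.sub_le hconv hw hx k)
  have hQ0 := nonneg_of_mem_subdiff_s13 hgw hD hw hmono hQ
  obtain ⟨u', hu'⟩ := hbw 1
  obtain ⟨c, hc⟩ := (Set.finite_range u').bddAbove
  refine ⟨Q, hQ, criticalNodes_subset_of_rows_eq hP0 hQ0 hrow (c := c) fun m i j => ?_, hrow⟩
  calc (Q ^ m) i j ≤ (Q ^ m *ᵥ 1) i := by
        simpa [mulVec, dotProduct] using Finset.single_le_sum
          (fun l _ => pow_apply_nonneg hQ0 m i l) (Finset.mem_univ j)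
    _ ≤ u' i := (hgw.pow_mulVec_le_iterate hD hw hQ hQ0 1 m).trans (hu' m) i
    _ ≤ c := hc ⟨i, rfl⟩

theorem stmt13_general {n : ℕ} (D : Set (Fin n → ℝ)) (hDo : IsOpen D)
    (f : (Fin n → ℝ) → (Fin n → ℝ))
    (hconv : ∀ i, ConvexOn ℝ D (fun x => f x i))
    (hmono : ∀ x ∈ D, ∀ y ∈ D, x ≤ y → f x ≤ f y)
    (v w : Fin n → ℝ) (hv : v ∈ D) (hw : w ∈ D) (hfv : f v = v) (hfw : f w = w)
    (gv gw : (Fin n → ℝ) → (Fin n → ℝ))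
    (hgv : ∀ y : Fin n → ℝ,
      Tendsto (fun ε : ℝ => ε⁻¹ • (f (v + ε • y) - f v)) (𝓝[>] (0:ℝ)) (𝓝 (gv y)))
    (hgw : ∀ y : Fin n → ℝ,
      Tendsto (fun ε : ℝ => ε⁻¹ • (f (w + ε • y) - f w)) (𝓝[>] (0:ℝ)) (𝓝 (gw y)))
    (hbv : ∀ x : Fin n → ℝ, ∃ u : Fin n → ℝ, ∀ k : ℕ, gv^[k] x ≤ u)
    (hbw : ∀ x : Fin n → ℝ, ∃ u : Fin n → ℝ, ∀ k : ℕ, gw^[k] x ≤ u) :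
    ∀ i j,
      (∃ P ∈ Subdiff f D v, i ∈ CriticalNodes P ∧ j ∈ CriticalNodes P ∧ 0 < P i j) ↔
      (∃ P ∈ Subdiff f D w, i ∈ CriticalNodes P ∧ j ∈ CriticalNodes P ∧ 0 < P i j) := by
  intro i j
  constructor <;> rintro ⟨P, hP, hi, hj, hPij⟩
  · obtain ⟨Q, hQ, hsub, hrow⟩ :=
      exists_mem_subdiff_rows_eq hDo hconv hmono hv hw hfv hfw hgv hgw hbv hbw hP
    exact ⟨Q, hQ, hsub hi, hsub hj, by rwa [hrow i hi]⟩
  · obtain ⟨Q, hQ, hsub, hrow⟩ :=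
      exists_mem_subdiff_rows_eq hDo hconv hmono hw hv hfw hfv hgw hgv hbw hbv hP
    exact ⟨Q, hQ, hsub hi, hsub hj, by rwa [hrow i hi]⟩

/-- the critical graphs of the subdifferentials at two tangentially
stable fixed points of a convex monotone map coincide. -/
theorem stmt13 {n : ℕ} (D : Set (Fin n → ℝ)) (hDo : IsOpen D) (hDc : Convex ℝ D)
    (f : (Fin n → ℝ) → (Fin n → ℝ)) (hmaps : Set.MapsTo f D D)
    (hconv : ∀ i, ConvexOn ℝ D (fun x => f x i))
    (hmono : ∀ x ∈ D, ∀ y ∈ D, x ≤ y → f x ≤ f y)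
    (v w : Fin n → ℝ) (hv : v ∈ D) (hw : w ∈ D) (hfv : f v = v) (hfw : f w = w)
    (gv gw : (Fin n → ℝ) → (Fin n → ℝ))
    (hgv : ∀ y : Fin n → ℝ,
      Tendsto (fun ε : ℝ => ε⁻¹ • (f (v + ε • y) - f v)) (𝓝[>] (0:ℝ)) (𝓝 (gv y)))
    (hgw : ∀ y : Fin n → ℝ,
      Tendsto (fun ε : ℝ => ε⁻¹ • (f (w + ε • y) - f w)) (𝓝[>] (0:ℝ)) (𝓝 (gw y)))
    (hbv : ∀ x : Fin n → ℝ, ∃ u : Fin n → ℝ, ∀ k : ℕ, gv^[k] x ≤ u)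
    (hbw : ∀ x : Fin n → ℝ, ∃ u : Fin n → ℝ, ∀ k : ℕ, gw^[k] x ≤ u) :
    ∀ i j,
      (∃ P ∈ Subdiff f D v, i ∈ CriticalNodes P ∧ j ∈ CriticalNodes P ∧ 0 < P i j) ↔
      (∃ P ∈ Subdiff f D w, i ∈ CriticalNodes P ∧ j ∈ CriticalNodes P ∧ 0 < P i j) :=
  stmt13_general D hDo f hconv hmono v w hv hw hfv hfw gv gw hgv hgw hbv hbw
end
end
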